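/- With the restricted ultrapower setup, the following Łoś theorem holds: for any sentence σ of ℒ_A with parameters from ∏_𝔛 K, N = ∏_𝔛 K / U satisfies [σ] if and only if {i ∈ M : K ⊨ σ[i]} ∈ U. -/

import Mathlib

namespace Paper

/-! ### Syntax of (second-order) arithmetic.

Terms of the language `L_A = {0, 1, +, ·, <}`, with number variables indexed by `ℕ`.
Formulas also allow atomic formulas `t ∈ X_k` (membership in a set variable) and
set quantifiers `allS`; first-order formulas are those avoiding both. -/

inductive PTerm where
  | var : ℕ → PTerm
  | zero : PTerm
  | one : PTerm
  | add : PTerm → PTerm → PTerm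
  | mul : PTerm → PTerm → PTerm

inductive Fml where
  | eq : PTerm → PTerm → Fml
  | lt : PTerm → PTerm → Fml
  | mem : PTerm → ℕ → Fml
  | not : Fml → Fml
  | imp : Fml → Fml → Fml
  | all : ℕ → Fml → Fml
  | allS : ℕ → Fml → Fml

def Fml.and (φ ψ : Fml) : Fml := .not (.imp φ (.not ψ))
def Fml.or (φ ψ : Fml) : Fml := .imp (.not φ) ψ
def Fml.iff (φ ψ : Fml) : Fml := (Fml.imp φ ψ).and (Fml.imp ψ φ)
def Fml.ex (x : ℕ) (φ : Fml) : Fml := .not (.all x (.not φ))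
def Fml.exS (k : ℕ) (φ : Fml) : Fml := .not (.allS k (.not φ))

/-- A structure for the language `{0, 1, +, ·, <}` on a carrier `M`
(bundled, so that several structures can live on the same carrier). -/
structure AStr (M : Type) where
  zero : M
  one : M
  add : M → M → M
  mul : M → M → M
  lt : M → M → Prop

/-- The standard model of arithmetic. -/
def natStr : AStr ℕ := ⟨0, 1, (· + ·), (· * ·), (· < ·)⟩

namespace PTerm

def vars : PTerm → Finset ℕ
  | var n => {n}
  | zero => ∅
  | one => ∅
  | add t u => t.vars ∪ u.vars
  | mul t u => t.vars ∪ u.vars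

/-- Substitution of a term `r` for the variable `x` (used only with `r` closed or
with `vars r ⊆ {x}`, in which case it is capture-free). -/
def subst (x : ℕ) (r : PTerm) : PTerm → PTerm
  | var n => if n = x then r else var n
  | zero => zero
  | one => one
  | add t u => add (subst x r t) (subst x r u)
  | mul t u => mul (subst x r t) (subst x r u)

def val {M : Type} (S : AStr M) (v : ℕ → M) : PTerm → M
  | var n => v n
  | zero => S.zero
  | one => S.one
  | add t u => S.add (t.val S v) (u.val S v)
  | mul t u => S.mul (t.val S v) (u.val S v)

end PTerm

namespace Fml

/-- Free number variables. -/
def freeN : Fml → Finset ℕ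
  | eq t u => t.vars ∪ u.vars
  | lt t u => t.vars ∪ u.vars
  | mem t _ => t.vars
  | not φ => φ.freeN
  | imp φ ψ => φ.freeN ∪ ψ.freeN
  | all x φ => φ.freeN.erase x
  | allS _ φ => φ.freeN

/-- Substitution of a term `r` for the (free) variable `x`. -/
def substN (x : ℕ) (r : PTerm) : Fml → Fml
  | eq t u => eq (PTerm.subst x r t) (PTerm.subst x r u)
  | lt t u => lt (PTerm.subst x r t) (PTerm.subst x r u)
  | mem t k => mem (PTerm.subst x r t) k
  | not φ => not (substN x r φ)
  | imp φ ψ => imp (substN x r φ) (substN x r ψ)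
  | all y φ => if y = x then all y φ else all y (substN x r φ)
  | allS k φ => allS k (substN x r φ)

/-- First-order formulas: no set variables, no set quantifiers. -/
def IsFO : Fml → Prop
  | eq _ _ => True
  | lt _ _ => True
  | mem _ _ => False
  | not φ => φ.IsFO
  | imp φ ψ => φ.IsFO ∧ ψ.IsFO
  | all _ φ => φ.IsFO
  | allS _ _ => False

/-- Arithmetical formulas: set variables allowed as parameters, but no set quantifiers. -/
def IsArith : Fml → Prop
  | eq _ _ => True
  | lt _ _ => True
  | mem _ _ => True
  | not φ => φ.IsArith
  | imp φ ψ => φ.IsArith ∧ ψ.IsArith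
  | all _ φ => φ.IsArith
  | allS _ _ => False

end Fml

/-! ### Satisfaction -/

/-- Satisfaction for a second-order structure `(M, 𝔛)`: number quantifiers range over `M`,
set quantifiers range over `𝔛`. -/
def Sat {M : Type} (S : AStr M) (𝔛 : Set (Set M)) : (ℕ → M) → (ℕ → Set M) → Fml → Prop
  | v, _, .eq t u => t.val S v = u.val S v
  | v, _, .lt t u => S.lt (t.val S v) (u.val S v)
  | v, w, .mem t k => t.val S v ∈ w k
  | v, w, .not φ => ¬ Sat S 𝔛 v w φ
  | v, w, .imp φ ψ => Sat S 𝔛 v w φ → Sat S 𝔛 v w ψ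
  | v, w, .all x φ => ∀ a : M, Sat S 𝔛 (Function.update v x a) w φ
  | v, w, .allS k φ => ∀ X ∈ 𝔛, Sat S 𝔛 v (Function.update w k X) φ

/-- First-order satisfaction. -/
def SatFO {M : Type} (S : AStr M) (v : ℕ → M) (φ : Fml) : Prop :=
  Sat S Set.univ v (fun _ => ∅) φ

/-- `M ⊨ T` for a first-order theory `T`. -/
def ModelsT {M : Type} (S : AStr M) (T : Set Fml) : Prop :=
  ∀ φ ∈ T, ∀ v, SatFO S v φ

/-- Semantic consequence (equivalently, by the completeness theorem, provability). -/
def Proves (T : Set Fml) (φ : Fml) : Prop :=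
  ∀ (M : Type) (S : AStr M), ModelsT S T → ∀ v, SatFO S v φ

/-- Consistency (equivalently, by the completeness theorem, having a model). -/
def ConsistentT (T : Set Fml) : Prop :=
  ∃ (M : Type) (S : AStr M), ModelsT S T

def IsFOSentence (φ : Fml) : Prop := φ.IsFO ∧ φ.freeN = ∅

/-- Completeness of a theory. -/
def CompleteT (T : Set Fml) : Prop :=
  ∀ φ, IsFOSentence φ → (Proves T φ ∨ Proves T φ.not)

/-! ### Peano arithmetic -/

def numeral : ℕ → PTerm
  | 0 => .zero
  | n + 1 => .add (numeral n) .one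

def univClosure (φ : Fml) : Fml := (φ.freeN.sort (· ≤ ·)).foldr Fml.all φ

/-- The induction axiom for `φ` in the variable `x` (before taking universal closure). -/
def indFml (φ : Fml) (x : ℕ) : Fml :=
  .imp ((φ.substN x .zero).and (.all x (.imp φ (φ.substN x (.add (.var x) .one)))))
    (.all x φ)

/-- The axioms of first-order Peano arithmetic `PA`. -/
def PAax : Set Fml :=
  {Fml.all 0 (.not (.eq (.add (.var 0) .one) .zero)),
   Fml.all 0 (.all 1 (.imp (.eq (.add (.var 0) .one) (.add (.var 1) .one))
     (.eq (.var 0) (.var 1)))),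
   Fml.all 0 (.eq (.add (.var 0) .zero) (.var 0)),
   Fml.all 0 (.all 1 (.eq (.add (.var 0) (.add (.var 1) .one))
     (.add (.add (.var 0) (.var 1)) .one))),
   Fml.all 0 (.eq (.mul (.var 0) .zero) .zero),
   Fml.all 0 (.all 1 (.eq (.mul (.var 0) (.add (.var 1) .one))
     (.add (.mul (.var 0) (.var 1)) (.var 0)))),
   Fml.all 0 (.all 1 (Fml.iff (.lt (.var 0) (.var 1))
     (Fml.ex 2 (.eq (.add (.var 0) (.add (.var 2) .one)) (.var 1)))))} ∪
  {ψ | ∃ φ x, Fml.IsFO φ ∧ ψ = univClosure (indFml φ x)}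

/-! ### Gödel coding -/

/-- The Cantor pairing function (the canonical pairing `⟨·,·⟩`). -/
def cpair (a b : ℕ) : ℕ := (a + b) * (a + b + 1) / 2 + a

def PTerm.code : PTerm → ℕ
  | .var n => cpair 0 n
  | .zero => cpair 1 0
  | .one => cpair 2 0
  | .add t u => cpair 3 (cpair t.code u.code)
  | .mul t u => cpair 4 (cpair t.code u.code)

def Fml.code : Fml → ℕ
  | .eq t u => cpair 5 (cpair t.code u.code)
  | .lt t u => cpair 6 (cpair t.code u.code)
  | .not φ => cpair 7 φ.code
  | .imp φ ψ => cpair 8 (cpair φ.code ψ.code)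
  | .all x φ => cpair 9 (cpair x φ.code)
  | .mem t k => cpair 10 (cpair t.code k)
  | .allS k φ => cpair 11 (cpair k φ.code)

/-- A theory identified with its set of Gödel codes. -/
def theoryCode (T : Set Fml) : Set ℕ := Fml.code '' T

/-! ### The arithmetical hierarchy (syntactic classes) -/

inductive IsDelta0 : Fml → Prop
  | eq (t u) : IsDelta0 (.eq t u)
  | lt (t u) : IsDelta0 (.lt t u)
  | mem (t k) : IsDelta0 (.mem t k)
  | not {φ} : IsDelta0 φ → IsDelta0 φ.not
  | imp {φ ψ} : IsDelta0 φ → IsDelta0 ψ → IsDelta0 (φ.imp ψ)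
  | ball {φ} (x t) : x ∉ PTerm.vars t → IsDelta0 φ →
      IsDelta0 (.all x (.imp (.lt (.var x) t) φ))

def IsSigma01 (φ : Fml) : Prop := ∃ x ψ, IsDelta0 ψ ∧ φ = Fml.ex x ψ

def IsPi01 (φ : Fml) : Prop := ∃ x ψ, IsDelta0 ψ ∧ φ = Fml.all x ψ

/-! ### Subsystems of second-order arithmetic, semantically -/

/-- The basic axioms (`PA⁻`, a discretely ordered commutative semiring). -/
def PAminusSem {M : Type} (S : AStr M) : Prop :=
  (∀ a b c : M, S.add a (S.add b c) = S.add (S.add a b) c) ∧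
  (∀ a b : M, S.add a b = S.add b a) ∧
  (∀ a b c : M, S.mul a (S.mul b c) = S.mul (S.mul a b) c) ∧
  (∀ a b : M, S.mul a b = S.mul b a) ∧
  (∀ a b c : M, S.mul a (S.add b c) = S.add (S.mul a b) (S.mul a c)) ∧
  (∀ a : M, S.add a S.zero = a) ∧
  (∀ a : M, S.mul a S.zero = S.zero) ∧
  (∀ a : M, S.mul a S.one = a) ∧
  (∀ a b c : M, S.lt a b → S.lt b c → S.lt a c) ∧
  (∀ a : M, ¬ S.lt a a) ∧
  (∀ a b : M, S.lt a b ∨ a = b ∨ S.lt b a) ∧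
  (∀ a b c : M, S.lt a b → S.lt (S.add a c) (S.add b c)) ∧
  (∀ a b c : M, S.lt S.zero c → S.lt a b → S.lt (S.mul a c) (S.mul b c)) ∧
  (∀ a b : M, S.lt a b → ∃ c : M, S.add a c = b) ∧
  S.lt S.zero S.one ∧
  (∀ a : M, S.lt S.zero a → a = S.one ∨ S.lt S.one a) ∧
  (∀ a : M, a = S.zero ∨ S.lt S.zero a)

/-- `(M,𝔛)` satisfies the induction axiom for `φ` in the variable `x`
(with arbitrary number and set parameters). -/
def SatInd {M : Type} (S : AStr M) (𝔛 : Set (Set M)) (φ : Fml) (x : ℕ) : Prop :=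
  ∀ (v : ℕ → M) (w : ℕ → Set M), (∀ k, w k ∈ 𝔛) →
    (Sat S 𝔛 (Function.update v x S.zero) w φ ∧
      ∀ a, Sat S 𝔛 (Function.update v x a) w φ →
        Sat S 𝔛 (Function.update v x (S.add a S.one)) w φ) →
    ∀ a, Sat S 𝔛 (Function.update v x a) w φ

/-- `(M,𝔛) ⊨ RCA₀`: basic axioms, `Σ⁰₁` induction and `Δ⁰₁` comprehension. -/
def SatRCA0 {M : Type} (S : AStr M) (𝔛 : Set (Set M)) : Prop :=
  PAminusSem S ∧
  (∀ φ x, IsSigma01 φ → SatInd S 𝔛 φ x) ∧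
  (∀ φ ψ x, IsSigma01 φ → IsPi01 ψ →
    ∀ (v : ℕ → M) (w : ℕ → Set M), (∀ k, w k ∈ 𝔛) →
      (∀ a, Sat S 𝔛 (Function.update v x a) w φ ↔ Sat S 𝔛 (Function.update v x a) w ψ) →
      {a : M | Sat S 𝔛 (Function.update v x a) w φ} ∈ 𝔛)

/-- `(M,𝔛) ⊨ ACA₀`: basic axioms, the induction axiom and arithmetical comprehension. -/
def SatACA0 {M : Type} (S : AStr M) (𝔛 : Set (Set M)) : Prop :=
  PAminusSem S ∧
  (∀ X ∈ 𝔛, S.zero ∈ X → (∀ a, a ∈ X → S.add a S.one ∈ X) → ∀ a, a ∈ X) ∧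
  (∀ φ x, Fml.IsArith φ → ∀ (v : ℕ → M) (w : ℕ → Set M), (∀ k, w k ∈ 𝔛) →
    {a : M | Sat S 𝔛 (Function.update v x a) w φ} ∈ 𝔛)

/-! ### Arithmetization inside a model

All notions below unfold the standard (`Δ₀`/`Σ₁`) arithmetized definitions at the
meta-level, using the operations of a structure `S : AStr M`.  On models of `IΣ₁`
they agree with satisfaction of the corresponding arithmetic formulas. -/

namespace AStr

variable {M : Type} (S : AStr M)

/-- Interpretation of numerals. -/
def num : ℕ → M
  | 0 => S.zero
  | n + 1 => S.add (num n) S.one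

def le (a b : M) : Prop := S.lt a b ∨ a = b

def two : M := S.add S.one S.one

/-- `p = ⟨a,b⟩` for the Cantor pairing function: `2p = (a+b)(a+b+1) + 2a`. -/
def PairRel (p a b : M) : Prop :=
  S.mul S.two p = S.add (S.mul (S.add a b) (S.add (S.add a b) S.one)) (S.mul S.two a)

/-- `r = a mod m`. -/
def ModRel (a m r : M) : Prop := S.lt r m ∧ ∃ q, a = S.add (S.mul q m) r

/-- Gödel's β-function: `x = β(c, i)` where `c = ⟨a,b⟩` and `x = a mod (1 + (i+1)b)`. -/
def BetaRel (c i x : M) : Prop :=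
  ∃ a b, S.PairRel c a b ∧ S.ModRel a (S.add S.one (S.mul (S.add i S.one) b)) x

/-- `s` codes a sequence of length `l` (as `s = ⟨c, l⟩`). -/
def SeqLen (s l : M) : Prop := ∃ c, S.PairRel s c l

/-- The `i`-th entry of the sequence coded by `s` is `x`. -/
def SeqAt (s i x : M) : Prop := ∃ c l, S.PairRel s c l ∧ S.lt i l ∧ S.BetaRel c i x

/-- The fixed `Δ₀` coding formula `x ∈ y` for (bounded) sets:
`y = ⟨a,b⟩` and `a mod (1 + (x+1)b) = 1` with modulus `> 1`, and `x < y`. -/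
def MemRel (x y : M) : Prop :=
  S.lt x y ∧ ∃ a b, S.PairRel y a b ∧
    S.lt S.one (S.add S.one (S.mul (S.add x S.one) b)) ∧
    S.ModRel a (S.add S.one (S.mul (S.add x S.one) b)) S.one

/-- Tagged pairs, used for codes of syntax: `x = ⟨tag, payload⟩`. -/
def Node (x tag payload : M) : Prop := S.PairRel x tag payload

/-- `x` is the code of the variable `v`. -/
def VarC (v x : M) : Prop := S.Node x (S.num 0) v

def AddC (t u y : M) : Prop := ∃ p, S.PairRel p t u ∧ S.Node y (S.num 3) p
def MulC (t u y : M) : Prop := ∃ p, S.PairRel p t u ∧ S.Node y (S.num 4) p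
def EqC (t u y : M) : Prop := ∃ p, S.PairRel p t u ∧ S.Node y (S.num 5) p
def LtC (t u y : M) : Prop := ∃ p, S.PairRel p t u ∧ S.Node y (S.num 6) p
def NotC (x y : M) : Prop := S.Node y (S.num 7) x
def ImpC (x y z : M) : Prop := ∃ p, S.PairRel p x y ∧ S.Node z (S.num 8) p
def AllC (v x y : M) : Prop := ∃ p, S.PairRel p v x ∧ S.Node y (S.num 9) p

/-- `s` codes a construction sequence for terms. -/
def IsTermConSeq (s : M) : Prop :=
  ∀ i x, S.SeqAt s i x →
    (∃ v, S.VarC v x) ∨ S.Node x (S.num 1) (S.num 0) ∨ S.Node x (S.num 2) (S.num 0) ∨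
    (∃ j k y z, S.lt j i ∧ S.lt k i ∧ S.SeqAt s j y ∧ S.SeqAt s k z ∧
      (S.AddC y z x ∨ S.MulC y z x))

/-- `x` is a term code (in the sense of `M`, possibly nonstandard). -/
def TermCodeM (x : M) : Prop := ∃ s i, S.IsTermConSeq s ∧ S.SeqAt s i x

/-- `s` codes a construction sequence for (first-order) formulas. -/
def IsFmlConSeq (s : M) : Prop :=
  ∀ i x, S.SeqAt s i x →
    (∃ t u, S.TermCodeM t ∧ S.TermCodeM u ∧ (S.EqC t u x ∨ S.LtC t u x)) ∨
    (∃ j y, S.lt j i ∧ S.SeqAt s j y ∧ S.NotC y x) ∨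
    (∃ j k y z, S.lt j i ∧ S.lt k i ∧ S.SeqAt s j y ∧ S.SeqAt s k z ∧ S.ImpC y z x) ∨
    (∃ j v y, S.lt j i ∧ S.SeqAt s j y ∧ S.AllC v y x)

/-- `x` is a formula code (in the sense of `M`, possibly nonstandard). -/
def FmlCodeM (x : M) : Prop := ∃ s i, S.IsFmlConSeq s ∧ S.SeqAt s i x

/-- Construction sequences of pairs (term code, occurrence flag for the variable `v`). -/
def IsOccConSeq (v s : M) : Prop :=
  ∀ i p, S.SeqAt s i p → ∃ x f, S.PairRel p x f ∧
    ((S.VarC v x ∧ f = S.num 1) ∨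
     (∃ u, S.VarC u x ∧ u ≠ v ∧ f = S.num 0) ∨
     ((S.Node x (S.num 1) (S.num 0) ∨ S.Node x (S.num 2) (S.num 0)) ∧ f = S.num 0) ∨
     (∃ j k y z g h pj pk, S.lt j i ∧ S.lt k i ∧ S.SeqAt s j pj ∧ S.SeqAt s k pk ∧
       S.PairRel pj y g ∧ S.PairRel pk z h ∧ (S.AddC y z x ∨ S.MulC y z x) ∧
       ((f = S.num 1 ∧ (g = S.num 1 ∨ h = S.num 1)) ∨
        (f = S.num 0 ∧ g = S.num 0 ∧ h = S.num 0))))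

/-- `f = 1` iff the variable `v` occurs in the term coded by `t` (`f ∈ {0,1}`). -/
def OccT (v t f : M) : Prop :=
  ∃ s i p, S.IsOccConSeq v s ∧ S.SeqAt s i p ∧ S.PairRel p t f

/-- Construction sequences of pairs (formula code, freeness flag for the variable `v`). -/
def IsFreeConSeq (v s : M) : Prop :=
  ∀ i p, S.SeqAt s i p → ∃ x f, S.PairRel p x f ∧
    ((∃ t u, (S.EqC t u x ∨ S.LtC t u x) ∧
       ((f = S.num 1 ∧ (S.OccT v t (S.num 1) ∨ S.OccT v u (S.num 1))) ∨
        (f = S.num 0 ∧ S.OccT v t (S.num 0) ∧ S.OccT v u (S.num 0)))) ∨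
     (∃ j y g pj, S.lt j i ∧ S.SeqAt s j pj ∧ S.PairRel pj y g ∧ S.NotC y x ∧ f = g) ∨
     (∃ j k y z g h pj pk, S.lt j i ∧ S.lt k i ∧ S.SeqAt s j pj ∧ S.SeqAt s k pk ∧
       S.PairRel pj y g ∧ S.PairRel pk z h ∧ S.ImpC y z x ∧
       ((f = S.num 1 ∧ (g = S.num 1 ∨ h = S.num 1)) ∨
        (f = S.num 0 ∧ g = S.num 0 ∧ h = S.num 0))) ∨
     (∃ j w y g pj, S.lt j i ∧ S.SeqAt s j pj ∧ S.PairRel pj y g ∧ S.AllC w y x ∧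
       ((w = v ∧ f = S.num 0) ∨ (w ≠ v ∧ f = g))))

/-- `f = 1` iff the variable `v` is free in the formula coded by `φ`. -/
def FreeF (v φ f : M) : Prop :=
  ∃ s i p, S.IsFreeConSeq v s ∧ S.SeqAt s i p ∧ S.PairRel p φ f

/-- Construction sequences of pairs (term code, result of substituting `t` for `v`). -/
def IsSubTConSeq (v t s : M) : Prop :=
  ∀ i p, S.SeqAt s i p → ∃ x x', S.PairRel p x x' ∧
    ((S.VarC v x ∧ x' = t) ∨
     (∃ u, S.VarC u x ∧ u ≠ v ∧ x' = x) ∨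
     ((S.Node x (S.num 1) (S.num 0) ∨ S.Node x (S.num 2) (S.num 0)) ∧ x' = x) ∨
     (∃ j k y z y' z' pj pk, S.lt j i ∧ S.lt k i ∧ S.SeqAt s j pj ∧ S.SeqAt s k pk ∧
       S.PairRel pj y y' ∧ S.PairRel pk z z' ∧
       ((S.AddC y z x ∧ S.AddC y' z' x') ∨ (S.MulC y z x ∧ S.MulC y' z' x'))))

/-- Substitution of the term (code) `t` for the variable `v` in terms: `x' = x[t/v]`. -/
def SubT (v t x x' : M) : Prop :=
  ∃ s i p, S.IsSubTConSeq v t s ∧ S.SeqAt s i p ∧ S.PairRel p x x'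

/-- Construction sequences for capture-free substitution in formulas. -/
def IsSubFConSeq (v t s : M) : Prop :=
  ∀ i p, S.SeqAt s i p → ∃ x x', S.PairRel p x x' ∧
    ((∃ a b a' b', S.SubT v t a a' ∧ S.SubT v t b b' ∧
       ((S.EqC a b x ∧ S.EqC a' b' x') ∨ (S.LtC a b x ∧ S.LtC a' b' x'))) ∨
     (∃ j y y' pj, S.lt j i ∧ S.SeqAt s j pj ∧ S.PairRel pj y y' ∧
       S.NotC y x ∧ S.NotC y' x') ∨
     (∃ j k y z y' z' pj pk, S.lt j i ∧ S.lt k i ∧ S.SeqAt s j pj ∧ S.SeqAt s k pk ∧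
       S.PairRel pj y y' ∧ S.PairRel pk z z' ∧ S.ImpC y z x ∧ S.ImpC y' z' x') ∨
     (∃ w y, S.AllC w y x ∧
       ((w = v ∧ x' = x) ∨
        (w ≠ v ∧ (S.OccT w t (S.num 0) ∨ S.FreeF v y (S.num 0)) ∧
          ∃ j y' pj, S.lt j i ∧ S.SeqAt s j pj ∧ S.PairRel pj y y' ∧ S.AllC w y' x'))))

/-- Capture-free substitution in formulas: `x' = x[t/v]`, with `t` substitutable for `v`. -/
def SubF (v t x x' : M) : Prop :=
  ∃ s i p, S.IsSubFConSeq v t s ∧ S.SeqAt s i p ∧ S.PairRel p x x'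

/-- `x` is (the code of) a generalization `∀v₁ ⋯ ∀vₖ y` of `y`. -/
def GenOf (y x : M) : Prop :=
  ∃ s i, S.SeqAt s (S.num 0) y ∧ S.SeqAt s i x ∧
    ∀ j z z', S.SeqAt s j z → S.SeqAt s (S.add j S.one) z' → S.le (S.add j S.one) i →
      ∃ v, S.AllC v z z'

/-- Codes of instances of the logical axiom schemes (a Hilbert-style calculus with
modus ponens as the only rule; axioms are taken together with their generalizations). -/
def LogAxCore (x : M) : Prop :=
  -- A1 : a → (b → a)
  (∃ a b y, S.FmlCodeM a ∧ S.FmlCodeM b ∧ S.ImpC b a y ∧ S.ImpC a y x) ∨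
  -- A2 : (a → (b → c)) → ((a → b) → (a → c))
  (∃ a b c bc abc ab ac r, S.FmlCodeM a ∧ S.FmlCodeM b ∧ S.FmlCodeM c ∧
    S.ImpC b c bc ∧ S.ImpC a bc abc ∧ S.ImpC a b ab ∧ S.ImpC a c ac ∧
    S.ImpC ab ac r ∧ S.ImpC abc r x) ∨
  -- A3 : (¬b → ¬a) → (a → b)
  (∃ a b na nb l r, S.FmlCodeM a ∧ S.FmlCodeM b ∧ S.NotC a na ∧ S.NotC b nb ∧
    S.ImpC nb na l ∧ S.ImpC a b r ∧ S.ImpC l r x) ∨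
  -- A4 : ∀v a → a[t/v]
  (∃ v t a a' al, S.TermCodeM t ∧ S.FmlCodeM a ∧ S.AllC v a al ∧ S.SubF v t a a' ∧
    S.ImpC al a' x) ∨
  -- A5 : ∀v (a → b) → (∀v a → ∀v b)
  (∃ v a b ab alab ala alb r, S.FmlCodeM a ∧ S.FmlCodeM b ∧ S.ImpC a b ab ∧
    S.AllC v ab alab ∧ S.AllC v a ala ∧ S.AllC v b alb ∧ S.ImpC ala alb r ∧
    S.ImpC alab r x) ∨
  -- A6 : a → ∀v a, for v not free in a
  (∃ v a ala, S.FmlCodeM a ∧ S.FreeF v a (S.num 0) ∧ S.AllC v a ala ∧ S.ImpC a ala x) ∨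
  -- E1 : t = t
  (∃ t, S.TermCodeM t ∧ S.EqC t t x) ∨
  -- E2 : u = w → w = u (variables)
  (∃ u w vu vw e1 e2, S.VarC u vu ∧ S.VarC w vw ∧ S.EqC vu vw e1 ∧ S.EqC vw vu e2 ∧
    S.ImpC e1 e2 x) ∨
  -- E3 : u = w → (w = z → u = z) (variables)
  (∃ u w z vu vw vz e1 e2 e3 r, S.VarC u vu ∧ S.VarC w vw ∧ S.VarC z vz ∧
    S.EqC vu vw e1 ∧ S.EqC vw vz e2 ∧ S.EqC vu vz e3 ∧ S.ImpC e2 e3 r ∧ S.ImpC e1 r x) ∨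
  -- E4 : congruence of +, ·, < with respect to = (variables)
  (∃ u1 w1 u2 w2 a1 b1 a2 b2 e1 e2 s1 s2 es r,
    S.VarC u1 a1 ∧ S.VarC w1 b1 ∧ S.VarC u2 a2 ∧ S.VarC w2 b2 ∧
    S.EqC a1 b1 e1 ∧ S.EqC a2 b2 e2 ∧
    ((S.AddC a1 a2 s1 ∧ S.AddC b1 b2 s2 ∧ S.EqC s1 s2 es) ∨
     (S.MulC a1 a2 s1 ∧ S.MulC b1 b2 s2 ∧ S.EqC s1 s2 es) ∨
     (S.LtC a1 a2 s1 ∧ S.LtC b1 b2 s2 ∧ S.ImpC s1 s2 es)) ∧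
    S.ImpC e2 es r ∧ S.ImpC e1 r x) ∨
  -- E5 : congruence of = (variables)
  (∃ u1 w1 u2 w2 a1 b1 a2 b2 e1 e2 d1 d2 inner r,
    S.VarC u1 a1 ∧ S.VarC w1 b1 ∧ S.VarC u2 a2 ∧ S.VarC w2 b2 ∧
    S.EqC a1 b1 e1 ∧ S.EqC a2 b2 e2 ∧ S.EqC a1 a2 d1 ∧ S.EqC b1 b2 d2 ∧
    S.ImpC d1 d2 inner ∧ S.ImpC e2 inner r ∧ S.ImpC e1 r x)

/-- Logical axioms: generalizations of instances of the axiom schemes. -/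
def LogAx (x : M) : Prop := ∃ y, S.LogAxCore y ∧ S.GenOf y x

/-- `s` codes a proof of `φ` from the set `Γ ⊆ M` of (codes of) sentences:
every entry is a logical axiom, a member of `Γ`, or follows by modus ponens. -/
def ProofFrom (Γ : Set M) (s φ : M) : Prop :=
  (∃ i, S.SeqAt s i φ) ∧
  ∀ i x, S.SeqAt s i x →
    S.LogAx x ∨ x ∈ Γ ∨
    (∃ j k y z, S.lt j i ∧ S.lt k i ∧ S.SeqAt s j y ∧ S.SeqAt s k z ∧ S.ImpC y x z)

/-- Provability (in the sense of `M`) from the axiom set `Γ ⊆ M`. -/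
def ProvFrom (Γ : Set M) (φ : M) : Prop := ∃ s, S.ProofFrom Γ s φ

/-- `M ⊨ Con_Γ` : there is no (possibly nonstandard) proof of a contradiction from `Γ`. -/
def ConOf (Γ : Set M) : Prop :=
  ¬ ∃ φ nφ, S.NotC φ nφ ∧ S.ProvFrom Γ φ ∧ S.ProvFrom Γ nφ

/-- `M ⊨ Con_T` for a (standard) theory `T`: `M` thinks every finite subtheory
of `T` is consistent. -/
def SatConTheory (T : Set Fml) : Prop :=
  ∀ F : Finset Fml, ↑F ⊆ T → S.ConOf {x : M | ∃ φ ∈ F, x = S.num (Fml.code φ)}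

/-! ### Coded sets, standard systems, filters on `P_𝔛` -/

/-- `A` is unbounded in `M`. -/
def Unb (A : Set M) : Prop := ∀ b, ∃ a ∈ A, S.lt b a

/-- `P_𝔛`: the collection of unbounded sets in `𝔛` (a partial order under `⊆`). -/
def PX (𝔛 : Set (Set M)) : Set (Set M) := {A | A ∈ 𝔛 ∧ S.Unb A}

/-- The `a`-th slice `(A)_a = {b | ⟨a,b⟩ ∈ A}`. -/
def SliceAt (A : Set M) (a : M) : Set M := {b | ∃ p, S.PairRel p a b ∧ p ∈ A}

/-- A function `M → M` is coded in `𝔛` if its graph (via the canonical pairing)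
belongs to `𝔛`. -/
def CodedFun (𝔛 : Set (Set M)) (f : M → M) : Prop :=
  ∃ G ∈ 𝔛, ∀ a b, f a = b ↔ b ∈ S.SliceAt G a

/-- A family `F` of sets is definable (over `(M,𝔛)`) if `{a | (A)_a ∈ F} ∈ 𝔛`
for every `A ∈ 𝔛`. -/
def DefinableFam (𝔛 F : Set (Set M)) : Prop :=
  ∀ A ∈ 𝔛, {a : M | S.SliceAt A a ∈ F} ∈ 𝔛

/-- `F` is a complete family: every function coded in `𝔛` with bounded range is
constant on some member of `F`. -/
def CompleteOn (𝔛 F : Set (Set M)) : Prop :=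
  ∀ f : M → M, S.CodedFun 𝔛 f → (∃ b, ∀ a, S.lt (f a) b) →
    ∃ A ∈ F, ∀ x ∈ A, ∀ y ∈ A, f x = f y

/-- The standard system `SSy(M)`: standard parts of the `M`-coded sets. -/
def SSy : Set (Set ℕ) := {A | ∃ c : M, ∀ n : ℕ, (n ∈ A ↔ S.MemRel (S.num n) c)}

/-- `M` is nonstandard. -/
def Nonstd : Prop := ∃ a : M, ∀ n : ℕ, a ≠ S.num n

/-- `M` is recursively saturated: every recursive type (in the variable `0`, with
finitely many parameters assigned to the variables `1, …, k`) that is finitely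
realized in `M` is realized in `M`. -/
def RecSat : Prop :=
  ∀ (p : Set Fml) (k : ℕ) (par : ℕ → M),
    (∀ φ ∈ p, Fml.IsFO φ ∧ φ.freeN ⊆ Finset.range (k + 1)) →
    ComputablePred (fun n => ∃ φ ∈ p, Fml.code φ = n) →
    (∀ F : Finset Fml, ↑F ⊆ p →
      ∃ a : M, ∀ φ ∈ F, SatFO S (fun i => if i = 0 then a else par i) φ) →
    ∃ a : M, ∀ φ ∈ p, SatFO S (fun i => if i = 0 then a else par i) φ

/-- `c` is the least code of the (bounded) set `A`. -/
def IsLeastCode (A : Set M) (c : M) : Prop :=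
  (∀ x, S.MemRel x c ↔ x ∈ A) ∧ ∀ c', (∀ x, S.MemRel x c' ↔ x ∈ A) → S.le c c'

/-- `A* = {⟨A ∩ I_{<a}⟩ | a ∈ M}`, the set of least codes of initial segments of `A`. -/
def star (A : Set M) : Set M :=
  {c | ∃ a, S.IsLeastCode (A ∩ {b | S.lt b a}) c}

end AStr

/-! ### Filters and partial orders of sets -/

/-- A filter on a partial order `P` of sets, ordered by inclusion: a proper, nonempty,
upward closed, downward directed subset of `P`. -/
def IsFilterOn {α : Type} (P F : Set (Set α)) : Prop :=
  F ⊆ P ∧ F.Nonempty ∧ F ≠ P ∧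
  (∀ A ∈ F, ∀ B ∈ P, A ⊆ B → B ∈ F) ∧
  (∀ A ∈ F, ∀ B ∈ F, ∃ C ∈ F, C ⊆ A ∧ C ⊆ B)

/-- An ultrafilter on a partial order of sets: a maximal filter. -/
def IsUltraOn {α : Type} (P U : Set (Set α)) : Prop :=
  IsFilterOn P U ∧ ∀ F, IsFilterOn P F → U ⊆ F → F = U

/-- A principal filter on a partial order of sets. -/
def IsPrincipalOn {α : Type} (P U : Set (Set α)) : Prop :=
  ∃ A ∈ P, U = {B | B ∈ P ∧ A ⊆ B}

/-- The countable chain condition for a partial order `P` of sets (ordered by `⊆`):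
every uncountable subset contains two distinct compatible elements. -/
def CCCOn {α : Type} (P : Set (Set α)) : Prop :=
  ∀ A : Set (Set α), A ⊆ P → ¬A.Countable →
    ∃ X ∈ A, ∃ Y ∈ A, X ≠ Y ∧ ∃ Z ∈ P, Z ⊆ X ∧ Z ⊆ Y

/-- `𝔛` is a Boolean algebra of sets. -/
def IsBoolAlg {α : Type} (𝔛 : Set (Set α)) : Prop :=
  Set.univ ∈ 𝔛 ∧ ∅ ∈ 𝔛 ∧
  (∀ A ∈ 𝔛, ∀ B ∈ 𝔛, A ∪ B ∈ 𝔛) ∧ (∀ A ∈ 𝔛, ∀ B ∈ 𝔛, A ∩ B ∈ 𝔛) ∧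
  (∀ A ∈ 𝔛, Aᶜ ∈ 𝔛)

/-- A filter on the Boolean algebra `𝔛`. -/
def IsBAFilter {α : Type} (𝔛 F : Set (Set α)) : Prop :=
  F ⊆ 𝔛 ∧ F.Nonempty ∧ ∅ ∉ F ∧
  (∀ A ∈ F, ∀ B ∈ 𝔛, A ⊆ B → B ∈ F) ∧
  (∀ A ∈ F, ∀ B ∈ F, A ∩ B ∈ F)

/-- An ultrafilter on the Boolean algebra `𝔛`: a maximal filter. -/
def IsBAUltra {α : Type} (𝔛 F : Set (Set α)) : Prop :=
  IsBAFilter 𝔛 F ∧ ∀ G, IsBAFilter 𝔛 G → F ⊆ G → G = F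

/-! ### Scott sets -/

/-- Oracle partial recursive functions: partial recursive in the oracle `O`. -/
inductive RecursiveIn (O : ℕ →. ℕ) : (ℕ →. ℕ) → Prop
  | oracle : RecursiveIn O O
  | zero : RecursiveIn O (pure 0)
  | succ : RecursiveIn O Nat.succ
  | left : RecursiveIn O ↑fun n : ℕ => n.unpair.1
  | right : RecursiveIn O ↑fun n : ℕ => n.unpair.2
  | pair {f g} : RecursiveIn O f → RecursiveIn O g →
      RecursiveIn O fun n => Nat.pair <$> f n <*> g n
  | comp {f g} : RecursiveIn O f → RecursiveIn O g →
      RecursiveIn O fun n => g n >>= f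
  | prec {f g} : RecursiveIn O f → RecursiveIn O g →
      RecursiveIn O (Nat.unpaired fun a n =>
        n.rec (f a) fun y IH => do let i ← IH; g (Nat.pair a (Nat.pair y i)))
  | rfind {f} : RecursiveIn O f →
      RecursiveIn O fun a => Nat.rfind fun n => (fun m => m = 0) <$> f (Nat.pair a n)

/-- The characteristic function of a set of natural numbers. -/
noncomputable def chi (A : Set ℕ) : ℕ →. ℕ :=
  fun n => Part.some (@ite _ (n ∈ A) (Classical.propDecidable _) 1 0)

/-- Turing reducibility: `B ≤_T A`. -/
def TuringLe (B A : Set ℕ) : Prop := RecursiveIn (chi A) (chi B)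

/-- A set of naturals coding a binary tree (codes of finite binary strings,
closed under initial segments). -/
def IsTreeCode (T : Set ℕ) : Prop :=
  (∀ n ∈ T, ∃ l : List Bool, Encodable.encode l = n) ∧
  (∀ l₁ l₂ : List Bool, l₁ <+: l₂ → Encodable.encode l₂ ∈ T → Encodable.encode l₁ ∈ T)

/-- `B` (as the characteristic function of a branch) is an infinite branch of the
binary tree coded by `T`. -/
def IsBranchThrough (B T : Set ℕ) : Prop :=
  ∀ n : ℕ, ∃ l : List Bool, l.length = n ∧
    (∀ i : Fin l.length, (l.get i = true ↔ (i : ℕ) ∈ B)) ∧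
    Encodable.encode l ∈ T

/-- A Scott set: a nonempty Boolean algebra of subsets of `ω` closed under relative
recursion and containing an infinite branch of every infinite binary tree coded in it. -/
def IsScottSet (𝔛 : Set (Set ℕ)) : Prop :=
  𝔛.Nonempty ∧
  (∀ A ∈ 𝔛, ∀ B ∈ 𝔛, A ∪ B ∈ 𝔛) ∧
  (∀ A ∈ 𝔛, Aᶜ ∈ 𝔛) ∧
  (∀ A ∈ 𝔛, ∀ B : Set ℕ, TuringLe B A → B ∈ 𝔛) ∧
  (∀ T ∈ 𝔛, IsTreeCode T → T.Infinite → ∃ B ∈ 𝔛, IsBranchThrough B T)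

/-- The sets represented in the theory `T`. -/
def repSet (T : Set Fml) : Set (Set ℕ) :=
  {A | ∃ φ : Fml, Fml.IsFO φ ∧ φ.freeN ⊆ {0} ∧
    ∀ n : ℕ, (n ∈ A → Proves T (φ.substN 0 (numeral n))) ∧
      (n ∉ A → Proves T (Fml.not (φ.substN 0 (numeral n))))}

/-- Martin's axiom. -/
def MartinsAxiom : Prop :=
  ∀ (P : Type) (_ : PartialOrder P),
    (∀ A : Set P, ¬A.Countable → ∃ x ∈ A, ∃ y ∈ A, x ≠ y ∧ ∃ z, z ≤ x ∧ z ≤ y) →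
    ∀ 𝒟 : Set (Set P), (∀ D ∈ 𝒟, ∀ x : P, ∃ y ∈ D, y ≤ x) →
      Cardinal.mk 𝒟 < Cardinal.continuum →
      ∃ F : Set P, F.Nonempty ∧ (∀ x ∈ F, ∀ y, x ≤ y → y ∈ F) ∧
        (∀ x ∈ F, ∀ y ∈ F, ∃ z ∈ F, z ≤ x ∧ z ≤ y) ∧
        ∀ D ∈ 𝒟, (F ∩ D).Nonempty

/-!
Łoś's theorem holds for a reduced power as soon as the truth sets of first-order formulas along
admissible functions lie in the Boolean algebra on which `U` is an ultrafilter, and first-order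
formulas have admissible Skolem functions: the connectives are handled by the ultrafilter, and a
universal quantifier by taking a Skolem function of `¬φ` as a uniform counterexample. Admissible
functions are then closed under terms, since a Skolem function of `x = t` evaluates `t`.

Here, after transport along `ϱ : K ≅ K₀`, the admissible functions are those coded in `𝔛`.
Because `C ∈ 𝔛` codes the elementary diagram of `K₀`, satisfaction in `K₀` along coded functions
is arithmetically definable over `(M, 𝔛)`: arithmetical comprehension puts the truth sets in `𝔛`,
and least witnesses (least-number principle) give Skolem functions with arithmetically defined
graphs. Finally, an ultrafilter on `P_𝔛` decides every set of `𝔛`, by maximality and because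
`𝔛` contains two disjoint unbounded sets.
-/

open Function

lemma sup_id_add_one_notMem (s : Finset ℕ) : s.sup id + 1 ∉ s := fun h => by
  simpa using Finset.subset_range_sup_succ s h

lemma comp_update_eq {α β : Type} (f : α → β) (g : ℕ → α) (x : ℕ) (a : α) :
    (fun k => f (update g x a k)) = update (fun k => f (g k)) x (f a) :=
  comp_update f g x a

lemma eval_update {α β : Type} (v : ℕ → α → β) (x : ℕ) (f : α → β) (i : α) :
    (fun k => update v x f k i) = update (fun k => v k i) x (f i) :=
  comp_update (fun g : α → β => g i) v x f

namespace PTerm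

variable {M : Type} (S : AStr M)

def VarsBelow (t : PTerm) (B : ℕ) : Prop := ∀ y ∈ t.vars, y < B

@[simp] lemma varsBelow_var {y B : ℕ} : (var y).VarsBelow B ↔ y < B := by
  simp [VarsBelow, vars]

@[simp] lemma varsBelow_zero {B : ℕ} : zero.VarsBelow B := by simp [VarsBelow, vars]

@[simp] lemma varsBelow_one {B : ℕ} : one.VarsBelow B := by simp [VarsBelow, vars]

@[simp] lemma varsBelow_add {t u : PTerm} {B : ℕ} :
    (add t u).VarsBelow B ↔ t.VarsBelow B ∧ u.VarsBelow B := by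
  simp [VarsBelow, vars, or_imp, forall_and]

@[simp] lemma varsBelow_mul {t u : PTerm} {B : ℕ} :
    (mul t u).VarsBelow B ↔ t.VarsBelow B ∧ u.VarsBelow B := by
  simp [VarsBelow, vars, or_imp, forall_and]

@[simp] lemma varsBelow_numeral {n B : ℕ} : (numeral n).VarsBelow B := by
  induction n <;> simp_all [numeral]

lemma VarsBelow.mono {t : PTerm} {B B' : ℕ} (h : t.VarsBelow B) (hB : B ≤ B') :
    t.VarsBelow B' :=
  fun y hy => (h y hy).trans_le hB

lemma val_congr {v v' : ℕ → M} :
    ∀ t : PTerm, (∀ k ∈ t.vars, v k = v' k) → t.val S v = t.val S v'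
  | var n, h => h n (by simp [vars])
  | zero, _ | one, _ => rfl
  | add t u, h | mul t u, h => by
      simp only [vars, Finset.mem_union] at h
      simp only [val, val_congr t fun k hk => h k (.inl hk), val_congr u fun k hk => h k (.inr hk)]

lemma val_update_of_notMem {v : ℕ → M} {x : ℕ} {a : M} {t : PTerm} (h : x ∉ t.vars) :
    t.val S (update v x a) = t.val S v :=
  val_congr S t fun _ hk => update_of_ne (ne_of_mem_of_not_mem hk h) a v

lemma val_update_of_varsBelow {v : ℕ → M} {x B : ℕ} {a : M} {t : PTerm}
    (ht : t.VarsBelow B) (hx : B ≤ x) : t.val S (update v x a) = t.val S v :=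
  val_update_of_notMem S fun hmem => (ht x hmem).not_ge hx

@[simp] lemma val_numeral (v : ℕ → M) (n : ℕ) : (numeral n).val S v = S.num n := by
  induction n <;> simp_all [numeral, val, AStr.num]

end PTerm

section Satisfaction

variable {M : Type} (S : AStr M) (𝔛 : Set (Set M)) (v : ℕ → M) (w : ℕ → Set M)

@[simp] lemma sat_and (φ ψ : Fml) : Sat S 𝔛 v w (φ.and ψ) ↔ Sat S 𝔛 v w φ ∧ Sat S 𝔛 v w ψ := by
  simp [Fml.and, Sat]

@[simp] lemma sat_or (φ ψ : Fml) : Sat S 𝔛 v w (φ.or ψ) ↔ Sat S 𝔛 v w φ ∨ Sat S 𝔛 v w ψ := by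
  simp [Fml.or, Sat, or_iff_not_imp_left]

@[simp] lemma sat_ex (x : ℕ) (φ : Fml) :
    Sat S 𝔛 v w (Fml.ex x φ) ↔ ∃ a, Sat S 𝔛 (update v x a) w φ := by
  simp [Fml.ex, Sat]

variable {S 𝔛 v w} in
lemma sat_congr : ∀ (φ : Fml) {v v' : ℕ → M} {w : ℕ → Set M},
    (∀ k ∈ φ.freeN, v k = v' k) → (Sat S 𝔛 v w φ ↔ Sat S 𝔛 v' w φ)
  | .eq t u, v, v', w, h | .lt t u, v, v', w, h => by
      simp only [Fml.freeN, Finset.mem_union] at h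
      simp only [Sat, PTerm.val_congr S t fun k hk => h k (.inl hk),
        PTerm.val_congr S u fun k hk => h k (.inr hk)]
  | .mem t k, v, v', w, h => by simp only [Sat, PTerm.val_congr S t h]
  | .not φ, v, v', w, h => not_congr (sat_congr φ h)
  | .imp φ ψ, v, v', w, h => by
      simp only [Fml.freeN, Finset.mem_union] at h
      exact imp_congr (sat_congr φ fun k hk => h k (.inl hk))
        (sat_congr ψ fun k hk => h k (.inr hk))
  | .all x φ, v, v', w, h => forall_congr' fun a => sat_congr φ fun k hk => by
      rcases eq_or_ne k x with rfl | hkx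
      · simp
      · simp [hkx, h k (Finset.mem_erase.2 ⟨hkx, hk⟩)]
  | .allS k φ, v, v', w, h => forall₂_congr fun X _ => sat_congr φ h

end Satisfaction

namespace AStr

variable {α β : Type}

structure PreservesOps (K : AStr α) (K' : AStr β) (ϱ : α → β) : Prop where
  map_zero : ϱ K.zero = K'.zero
  map_one : ϱ K.one = K'.one
  map_add : ∀ a b, ϱ (K.add a b) = K'.add (ϱ a) (ϱ b)
  map_mul : ∀ a b, ϱ (K.mul a b) = K'.mul (ϱ a) (ϱ b)

structure IsIso (K : AStr α) (K' : AStr β) (ϱ : α → β) : Prop extends PreservesOps K K' ϱ where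
  bijective : Bijective ϱ
  lt_iff : ∀ a b, K.lt a b ↔ K'.lt (ϱ a) (ϱ b)

end AStr

section Transfer

variable {α β : Type} {K : AStr α} {K' : AStr β} {ϱ : α → β}

lemma PTerm.val_map (hϱ : K.PreservesOps K' ϱ) (v : ℕ → α) :
    ∀ t : PTerm, t.val K' (fun k => ϱ (v k)) = ϱ (t.val K v)
  | .var _ => rfl
  | .zero => hϱ.map_zero.symm
  | .one => hϱ.map_one.symm
  | .add t u => by simp only [val, val_map hϱ v t, val_map hϱ v u, hϱ.map_add]
  | .mul t u => by simp only [val, val_map hϱ v t, val_map hϱ v u, hϱ.map_mul]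

lemma satFO_map (hϱ : K.IsIso K' ϱ) :
    ∀ (φ : Fml) (v : ℕ → α), φ.IsFO → (SatFO K' (fun k => ϱ (v k)) φ ↔ SatFO K v φ)
  | .eq t u, v, _ => by
      simp only [SatFO, Sat, PTerm.val_map hϱ.toPreservesOps, hϱ.bijective.injective.eq_iff]
  | .lt t u, v, _ => by
      simp only [SatFO, Sat, PTerm.val_map hϱ.toPreservesOps, hϱ.lt_iff]
  | .not φ, v, hφ => not_congr (satFO_map hϱ φ v hφ)
  | .imp φ ψ, v, hφψ => imp_congr (satFO_map hϱ φ v hφψ.1) (satFO_map hϱ ψ v hφψ.2)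
  | .all x φ, v, hφ => by
      have key (a : α) := satFO_map hϱ φ (update v x a) hφ
      simp only [SatFO, comp_update_eq] at key
      simp only [SatFO, Sat, hϱ.bijective.surjective.forall, key]
  | .mem _ _, _, hφ | .allS _ _, _, hφ => hφ.elim

end Transfer

section Los

variable {M KT NT : Type}

/-- `π` presents `N` as the reduced power of `K` over the functions satisfying `Adm`, modulo `U`;
with `Adm f` meaning that `ϱ ∘ f` is coded in `𝔛`, this is `∏_𝔛 K / U`. -/
structure IsReducedPower (K : AStr KT) (N : AStr NT) (π : (M → KT) → NT)
    (Adm : (M → KT) → Prop) (U : Set (Set M)) : Prop where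
  surj : ∀ n : NT, ∃ f, Adm f ∧ π f = n
  eq_iff : ∀ f g, Adm f → Adm g → (π f = π g ↔ {a | f a = g a} ∈ U)
  map_zero : ∀ f, Adm f → (∀ a, f a = K.zero) → π f = N.zero
  map_one : ∀ f, Adm f → (∀ a, f a = K.one) → π f = N.one
  map_add : ∀ f g h, Adm f → Adm g → Adm h → (∀ a, h a = K.add (f a) (g a)) →
    N.add (π f) (π g) = π h
  map_mul : ∀ f g h, Adm f → Adm g → Adm h → (∀ a, h a = K.mul (f a) (g a)) →
    N.mul (π f) (π g) = π h
  lt_iff : ∀ f g, Adm f → Adm g → (N.lt (π f) (π g) ↔ {a | K.lt (f a) (g a)} ∈ U)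

structure IsUltrafilterIn (𝔅 U : Set (Set M)) : Prop where
  mem_of_subset : ∀ A ∈ U, ∀ B ∈ 𝔅, A ⊆ B → B ∈ U
  inter_mem : ∀ A ∈ U, ∀ B ∈ U, A ∩ B ∈ U
  compl_mem_iff : ∀ D ∈ 𝔅, Dᶜ ∈ U ↔ D ∉ U

def TruthSetsIn (K : AStr KT) (Adm : (M → KT) → Prop) (𝔅 : Set (Set M)) : Prop :=
  ∀ (φ : Fml) (v : ℕ → M → KT), φ.IsFO → (∀ k, Adm (v k)) →
    {i | SatFO K (fun k => v k i) φ} ∈ 𝔅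

def HasSkolemFunctions (K : AStr KT) (Adm : (M → KT) → Prop) : Prop :=
  ∀ (φ : Fml) (v : ℕ → M → KT) (x : ℕ), φ.IsFO → (∀ k, Adm (v k)) →
    ∃ f, Adm f ∧ ∀ i, (∃ a, SatFO K (update (fun k => v k i) x a) φ) →
      SatFO K (update (fun k => v k i) x (f i)) φ

variable {K : AStr KT} {N : AStr NT} {π : (M → KT) → NT} {Adm : (M → KT) → Prop}
  {𝔅 U : Set (Set M)}

lemma IsUltrafilterIn.setOf_imp_mem_iff (hU : IsUltrafilterIn 𝔅 U) {p q : M → Prop}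
    (hp : {i | p i} ∈ 𝔅) (hq : {i | q i} ∈ 𝔅) (hpq : {i | p i → q i} ∈ 𝔅) :
    {i | p i → q i} ∈ U ↔ ({i | p i} ∈ U → {i | q i} ∈ U) := by
  refine ⟨fun h hpU => hU.mem_of_subset _ (hU.inter_mem _ hpU _ h) _ hq fun i hi => hi.2 hi.1,
    fun h => ?_⟩
  by_cases hpU : {i | p i} ∈ U
  · exact hU.mem_of_subset _ (h hpU) _ hpq fun i hqi _ => hqi
  · exact hU.mem_of_subset _ ((hU.compl_mem_iff _ hp).2 hpU) _ hpq fun i hpi hpi' =>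
      (hpi hpi').elim

lemma forall_adm_update {v : ℕ → M → KT} (hv : ∀ k, Adm (v k)) {x : ℕ} {f : M → KT}
    (hf : Adm f) : ∀ k, Adm (update v x f k) :=
  (forall_update_iff v fun _ g => Adm g).2 ⟨hf, fun k _ => hv k⟩

/-- Skolem functions for `x = t`, with `x` not in `t`, evaluate `t`. -/
lemma HasSkolemFunctions.adm_val (hsk : HasSkolemFunctions K Adm) (t : PTerm)
    {v : ℕ → M → KT} (hv : ∀ k, Adm (v k)) : Adm (fun i => t.val K (fun k => v k i)) := by
  set x := t.vars.sup id + 1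
  have hx : x ∉ t.vars := sup_id_add_one_notMem _
  have hsat (i : M) (a : KT) :
      SatFO K (update (fun k => v k i) x a) (.eq (.var x) t) ↔ a = t.val K (fun k => v k i) := by
    simp [SatFO, Sat, PTerm.val, PTerm.val_update_of_notMem K hx]
  obtain ⟨f, hf, hfv⟩ := hsk (.eq (.var x) t) v x trivial hv
  convert hf using 1
  funext i
  exact ((hsat i _).1 (hfv i ⟨_, (hsat i _).2 rfl⟩)).symm

lemma IsReducedPower.val_eq (hπ : IsReducedPower K N π Adm U) (hsk : HasSkolemFunctions K Adm)
    {v : ℕ → M → KT} (hv : ∀ k, Adm (v k)) :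
    ∀ t : PTerm, π (fun i => t.val K (fun k => v k i)) = t.val N (fun k => π (v k))
  | .var _ => rfl
  | .zero => hπ.map_zero _ (hsk.adm_val .zero hv) fun _ => rfl
  | .one => hπ.map_one _ (hsk.adm_val .one hv) fun _ => rfl
  | .add t u => by
      rw [PTerm.val, ← hπ.val_eq hsk hv t, ← hπ.val_eq hsk hv u]
      exact (hπ.map_add _ _ _ (hsk.adm_val t hv) (hsk.adm_val u hv)
        (hsk.adm_val (.add t u) hv) fun _ => rfl).symm
  | .mul t u => by
      rw [PTerm.val, ← hπ.val_eq hsk hv t, ← hπ.val_eq hsk hv u]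
      exact (hπ.map_mul _ _ _ (hsk.adm_val t hv) (hsk.adm_val u hv)
        (hsk.adm_val (.mul t u) hv) fun _ => rfl).symm

theorem IsReducedPower.satFO_iff (hπ : IsReducedPower K N π Adm U) (hU : IsUltrafilterIn 𝔅 U)
    (htr : TruthSetsIn K Adm 𝔅) (hsk : HasSkolemFunctions K Adm) :
    ∀ (φ : Fml) (v : ℕ → M → KT), φ.IsFO → (∀ k, Adm (v k)) →
      (SatFO N (fun k => π (v k)) φ ↔ {i | SatFO K (fun k => v k i) φ} ∈ U)
  | .eq t u, v, _, hv => by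
      simp only [SatFO, Sat, ← hπ.val_eq hsk hv]
      exact hπ.eq_iff _ _ (hsk.adm_val t hv) (hsk.adm_val u hv)
  | .lt t u, v, _, hv => by
      simp only [SatFO, Sat, ← hπ.val_eq hsk hv]
      exact hπ.lt_iff _ _ (hsk.adm_val t hv) (hsk.adm_val u hv)
  | .not φ, v, hφ, hv =>
      (not_congr (hπ.satFO_iff hU htr hsk φ v hφ hv)).trans
        (hU.compl_mem_iff _ (htr φ v hφ hv)).symm
  | .imp φ ψ, v, hφψ, hv =>
      (imp_congr (hπ.satFO_iff hU htr hsk φ v hφψ.1 hv)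
        (hπ.satFO_iff hU htr hsk ψ v hφψ.2 hv)).trans
        (hU.setOf_imp_mem_iff (htr φ v hφψ.1 hv) (htr ψ v hφψ.2 hv) (htr _ v hφψ hv)).symm
  | .all x φ, v, hφ, hv => by
      have ih {f : M → KT} (hf : Adm f) :=
        hπ.satFO_iff hU htr hsk φ (update v x f) hφ (forall_adm_update hv hf)
      simp only [comp_update_eq, eval_update] at ih
      constructor
      · intro h
        -- a Skolem function for `¬φ` is a counterexample wherever there is one
        obtain ⟨f, hf, hfφ⟩ := hsk (.not φ) v x hφ hv
        refine hU.mem_of_subset _ ((ih hf).1 (h (π f))) _ (htr _ v hφ hv) fun i hi => ?_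
        by_contra hne
        exact hfφ i (not_forall.1 hne) hi
      · intro h n
        obtain ⟨g, hg, rfl⟩ := hπ.surj n
        refine (ih hg).2 (hU.mem_of_subset _ h _ ?_ fun i hi => hi (g i))
        simpa only [eval_update] using htr φ _ hφ (forall_adm_update hv hg)
  | .mem _ _, _, hφ, _ | .allS _ _, _, hφ, _ => hφ.elim

end Los

namespace PAminusSem

variable {M : Type} {S : AStr M}

protected lemma add_assoc (h : PAminusSem S) (a b c : M) :
    S.add a (S.add b c) = S.add (S.add a b) c := h.1 a b c
protected lemma add_comm (h : PAminusSem S) (a b : M) : S.add a b = S.add b a := h.2.1 a b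
protected lemma mul_assoc (h : PAminusSem S) (a b c : M) :
    S.mul a (S.mul b c) = S.mul (S.mul a b) c := h.2.2.1 a b c
protected lemma mul_comm (h : PAminusSem S) (a b : M) : S.mul a b = S.mul b a := h.2.2.2.1 a b
protected lemma mul_add (h : PAminusSem S) (a b c : M) :
    S.mul a (S.add b c) = S.add (S.mul a b) (S.mul a c) := h.2.2.2.2.1 a b c
protected lemma add_zero (h : PAminusSem S) (a : M) : S.add a S.zero = a := h.2.2.2.2.2.1 a
protected lemma mul_zero (h : PAminusSem S) (a : M) : S.mul a S.zero = S.zero :=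
  h.2.2.2.2.2.2.1 a
protected lemma mul_one (h : PAminusSem S) (a : M) : S.mul a S.one = a := h.2.2.2.2.2.2.2.1 a
protected lemma lt_trans (h : PAminusSem S) {a b c : M} : S.lt a b → S.lt b c → S.lt a c :=
  h.2.2.2.2.2.2.2.2.1 a b c
protected lemma lt_irrefl (h : PAminusSem S) (a : M) : ¬ S.lt a a := h.2.2.2.2.2.2.2.2.2.1 a
protected lemma lt_trichotomy (h : PAminusSem S) (a b : M) : S.lt a b ∨ a = b ∨ S.lt b a :=
  h.2.2.2.2.2.2.2.2.2.2.1 a b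
protected lemma add_lt_add_right (h : PAminusSem S) {a b : M} (hab : S.lt a b) (c : M) :
    S.lt (S.add a c) (S.add b c) := h.2.2.2.2.2.2.2.2.2.2.2.1 a b c hab
protected lemma exists_add_of_lt (h : PAminusSem S) {a b : M} :
    S.lt a b → ∃ c, S.add a c = b := h.2.2.2.2.2.2.2.2.2.2.2.2.2.1 a b
protected lemma zero_lt_one (h : PAminusSem S) : S.lt S.zero S.one :=
  h.2.2.2.2.2.2.2.2.2.2.2.2.2.2.1
protected lemma eq_one_or_one_lt (h : PAminusSem S) {a : M} :
    S.lt S.zero a → a = S.one ∨ S.lt S.one a := h.2.2.2.2.2.2.2.2.2.2.2.2.2.2.2.1 a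
protected lemma eq_zero_or_pos (h : PAminusSem S) (a : M) : a = S.zero ∨ S.lt S.zero a :=
  h.2.2.2.2.2.2.2.2.2.2.2.2.2.2.2.2 a

/- A model of `PA⁻` is a discretely ordered commutative semiring. The instances below depend on
`h`, so proofs install them locally with `let`; `S.add`, `S.lt`, … are then definitionally
`+`, `<`, … and statements about `S` are moved into this language with `change`. -/

abbrev commSemiring (h : PAminusSem S) : CommSemiring M where
  zero := S.zero
  one := S.one
  add := S.add
  mul := S.mul
  add_assoc a b c := (h.add_assoc a b c).symm
  zero_add a := (h.add_comm _ _).trans (h.add_zero a)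
  add_zero := h.add_zero
  add_comm := h.add_comm
  mul_assoc a b c := (h.mul_assoc a b c).symm
  one_mul a := (h.mul_comm _ _).trans (h.mul_one a)
  mul_one := h.mul_one
  zero_mul a := (h.mul_comm _ _).trans (h.mul_zero a)
  mul_zero := h.mul_zero
  left_distrib := h.mul_add
  right_distrib a b c := by
    change S.mul (S.add a b) c = S.add (S.mul a c) (S.mul b c)
    rw [h.mul_comm, h.mul_add, h.mul_comm c a, h.mul_comm c b]
  mul_comm := h.mul_comm
  nsmul n a := Nat.rec S.zero (fun _ b => S.add b a) n
  nsmul_zero _ := rfl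
  nsmul_succ _ _ := rfl

noncomputable abbrev linearOrder (h : PAminusSem S) : LinearOrder M where
  le := S.le
  lt := S.lt
  le_refl _ := Or.inr rfl
  le_trans a b c := by
    rintro (hab | rfl) (hbc | rfl)
    exacts [Or.inl (h.lt_trans hab hbc), Or.inl hab, Or.inl hbc, Or.inr rfl]
  le_antisymm a b := by
    rintro (hab | rfl) (hba | hba)
    exacts [(h.lt_irrefl a (h.lt_trans hab hba)).elim, hba.symm, rfl, rfl]
  le_total a b := by
    rcases h.lt_trichotomy a b with hab | rfl | hba
    exacts [Or.inl (Or.inl hab), Or.inl (Or.inr rfl), Or.inr (Or.inl hba)]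
  lt_iff_le_not_ge a b := by
    refine ⟨fun hab => ⟨Or.inl hab, ?_⟩, ?_⟩
    · rintro (hba | rfl)
      exacts [h.lt_irrefl _ (h.lt_trans hab hba), h.lt_irrefl _ hab]
    · rintro ⟨hab | rfl, hba⟩
      exacts [hab, (hba (Or.inr rfl)).elim]
  toDecidableLE := Classical.decRel _

theorem canonicallyOrderedAdd (h : PAminusSem S) :
    letI := h.commSemiring; letI := h.linearOrder; CanonicallyOrderedAdd M := by
  let _ := h.commSemiring; let _ := h.linearOrder
  have le_self_add (a b : M) : a ≤ a + b := by
    rcases h.eq_zero_or_pos b with rfl | hb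
    · exact (add_zero a).ge
    · have := h.add_lt_add_right hb a
      exact Or.inl (by rwa [h.add_comm S.zero, h.add_zero, h.add_comm] at this)
  exact {
    exists_add_of_le := by
      rintro a b (hab | rfl)
      · obtain ⟨c, hc⟩ := h.exists_add_of_lt hab
        exact ⟨c, hc.symm⟩
      · exact ⟨0, (add_zero a).symm⟩
    le_add_self a b := add_comm a b ▸ le_self_add a b
    le_self_add }

theorem isOrderedCancelAddMonoid (h : PAminusSem S) :
    letI := h.commSemiring; letI := h.linearOrder; IsOrderedCancelAddMonoid M := by
  let _ := h.commSemiring; let _ := h.linearOrder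
  have add_lt_add_left {a b : M} (hab : a < b) (c : M) : c + a < c + b := by
    rw [add_comm c, add_comm c]; exact h.add_lt_add_right hab c
  exact {
    add_le_add_left := by
      rintro a b (hab | rfl) c
      exacts [Or.inl (h.add_lt_add_right hab c), le_rfl]
    le_of_add_le_add_left a b c hbc := not_lt.1 fun hcb =>
      (add_lt_add_left hcb a).not_ge hbc }

theorem add_one_le_of_lt (h : PAminusSem S) {a b : M} :
    letI := h.commSemiring; letI := h.linearOrder; a < b → a + 1 ≤ b := by
  let _ := h.commSemiring; let _ := h.linearOrder; have _ := h.isOrderedCancelAddMonoid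
  intro hab
  obtain ⟨c, hc⟩ := h.exists_add_of_lt hab
  change a + c = b at hc
  subst hc
  rcases h.eq_zero_or_pos c with hc | hc
  · exact absurd hab (by rw [show c = 0 from hc, add_zero]; exact lt_irrefl a)
  rcases h.eq_one_or_one_lt hc with rfl | hc
  · exact le_rfl
  · exact (add_lt_add_right hc a).le

theorem pairRel_inj (h : PAminusSem S) {p a b c d : M} (h1 : S.PairRel p a b)
    (h2 : S.PairRel p c d) : a = c ∧ b = d := by
  let _ := h.commSemiring; let _ := h.linearOrder
  have _ := h.canonicallyOrderedAdd; have _ := h.isOrderedCancelAddMonoid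
  change (1 + 1) * p = (a + b) * (a + b + 1) + (1 + 1) * a at h1
  change (1 + 1) * p = (c + d) * (c + d + 1) + (1 + 1) * c at h2
  have double_inj {x y : M} (hxy : x + x = y + y) : x = y := by
    rcases lt_trichotomy x y with hlt | heq | hgt
    exacts [absurd hxy (add_lt_add hlt hlt).ne, heq, absurd hxy (add_lt_add hgt hgt).ne']
  -- the code of a pair grows strictly with `a + b`
  have key (a b c d : M) (hlt : a + b < c + d) :
      (a + b) * (a + b + 1) + (1 + 1) * a < (c + d) * (c + d + 1) + (1 + 1) * c :=
    calc (a + b) * (a + b + 1) + (1 + 1) * a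
        ≤ (a + b) * (a + b + 1) + (1 + 1) * (a + b) := by gcongr; exact le_self_add
      _ < (a + b) * (a + b + 1) + (1 + 1) * (a + b) + 1 + 1 :=
        lt_add_of_lt_of_pos (lt_add_of_pos_right _ h.zero_lt_one) h.zero_lt_one
      _ = (a + b + 1) * (a + b + 1 + 1) := by ring
      _ ≤ (c + d) * (c + d + 1) := by
        have := h.add_one_le_of_lt hlt
        gcongr
      _ ≤ (c + d) * (c + d + 1) + (1 + 1) * c := le_self_add
  rcases lt_trichotomy (a + b) (c + d) with hlt | heq | hgt
  · exact absurd (h1.symm.trans h2) (key a b c d hlt).ne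
  · rw [h1, heq] at h2
    have hac : a = c := double_inj (by simpa only [add_mul, one_mul] using add_left_cancel h2)
    subst hac
    exact ⟨rfl, add_left_cancel heq⟩
  · exact absurd (h1.symm.trans h2) (key c d a b hgt).ne'

theorem add_self_ne_add_self_add_one (h : PAminusSem S) (b c : M) :
    S.add b b ≠ S.add (S.add c c) S.one := by
  let _ := h.commSemiring; let _ := h.linearOrder
  have _ := h.canonicallyOrderedAdd; have _ := h.isOrderedCancelAddMonoid
  have one_pos : (0 : M) < 1 := h.zero_lt_one
  change b + b ≠ c + c + 1
  rcases le_or_gt b c with hbc | hcb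
  · exact (lt_of_le_of_lt (add_le_add hbc hbc) (lt_add_of_pos_right _ one_pos)).ne
  · have hcb' := h.add_one_le_of_lt hcb
    refine (?_ : c + c + 1 < b + b).ne'
    calc c + c + 1 < c + c + 1 + 1 := lt_add_of_pos_right _ one_pos
      _ = (c + 1) + (c + 1) := by ring
      _ ≤ b + b := add_le_add hcb' hcb'

end PAminusSem

namespace SatACA0

variable {M : Type} {S : AStr M} {𝔛 : Set (Set M)}

lemma paMinus (hACA : SatACA0 S 𝔛) : PAminusSem S := hACA.1

lemma comprehension (hACA : SatACA0 S 𝔛) {φ : Fml} (hφ : φ.IsArith) (x : ℕ) (v : ℕ → M)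
    {w : ℕ → Set M} (hw : ∀ k, w k ∈ 𝔛) : {a | Sat S 𝔛 (update v x a) w φ} ∈ 𝔛 :=
  hACA.2.2 φ x hφ v w hw

lemma induction (hACA : SatACA0 S 𝔛) {X : Set M} (hX : X ∈ 𝔛) (h0 : S.zero ∈ X)
    (hsucc : ∀ a ∈ X, S.add a S.one ∈ X) (a : M) : a ∈ X :=
  hACA.2.1 X hX h0 hsucc a

lemma compl_mem (hACA : SatACA0 S 𝔛) {A : Set M} (hA : A ∈ 𝔛) : Aᶜ ∈ 𝔛 := by
  simpa [Sat, PTerm.val, Set.compl_def] using hACA.comprehension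
    (φ := .not (.mem (.var 0) 0)) trivial 0 (fun _ => S.zero) (w := fun _ => A) fun _ => hA

lemma inter_mem (hACA : SatACA0 S 𝔛) {A B : Set M} (hA : A ∈ 𝔛) (hB : B ∈ 𝔛) :
    A ∩ B ∈ 𝔛 := by
  simpa [Sat, PTerm.val] using hACA.comprehension
    (φ := (Fml.mem (.var 0) 0).and (.mem (.var 0) 1)) ⟨trivial, trivial⟩ 0 (fun _ => S.zero)
    (w := fun k => if k = 0 then A else B) fun k => by split_ifs <;> assumption

lemma exists_least (hACA : SatACA0 S 𝔛) {X : Set M} (hX : X ∈ 𝔛) {a : M} (ha : a ∈ X) :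
    ∃ m ∈ X, ∀ y ∈ X, S.le m y := by
  have h := hACA.paMinus
  let _ := h.commSemiring; let _ := h.linearOrder; have _ := h.canonicallyOrderedAdd
  by_contra! hno
  -- the initial segments disjoint from `X` form an inductive set
  set Y := {b : M | ∀ y, S.le y b → y ∉ X}
  have hY : Y ∈ 𝔛 := by
    convert hACA.comprehension (φ := .all 1 (.imp ((Fml.lt (.var 1) (.var 0)).or
      (.eq (.var 1) (.var 0))) (.not (.mem (.var 1) 0)))) ⟨⟨trivial, trivial⟩, trivial⟩ 0
      (fun _ => S.zero) (w := fun _ => X) (fun _ => hX) using 1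
    ext b
    simp [Y, Sat, PTerm.val, AStr.le]
  have hY0 : S.zero ∈ Y := fun y hy hyX => by
    obtain ⟨z, -, hz⟩ := hno y hyX
    exact hz ((le_antisymm (show y ≤ 0 from hy) zero_le).symm ▸ (zero_le : (0 : M) ≤ z))
  have hYsucc (b : M) (hb : b ∈ Y) : S.add b S.one ∈ Y := fun y hy hyX => by
    obtain ⟨z, hzX, hz⟩ := hno y hyX
    have hzy : z < y := lt_of_not_ge hz
    exact hb z (not_lt.1 fun hbz => (h.add_one_le_of_lt hbz).not_gt (hzy.trans_le hy)) hzX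
  exact hACA.induction hY hY0 hYsucc a a (le_refl a) ha

lemma exists_add_self_eq_mul_succ (hACA : SatACA0 S 𝔛) (h𝔛 : 𝔛.Nonempty) (s : M) :
    ∃ w, S.add w w = S.mul s (S.add s S.one) := by
  obtain ⟨X, hX⟩ := h𝔛
  let _ := hACA.paMinus.commSemiring
  have hE : {s | ∃ w, S.add w w = S.mul s (S.add s S.one)} ∈ 𝔛 := by
    convert hACA.comprehension (φ := Fml.ex 1 (.eq (.add (.var 1) (.var 1))
      (.mul (.var 0) (.add (.var 0) .one)))) trivial 0 (fun _ => S.zero) (w := fun _ => X)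
      (fun _ => hX) using 1
    ext
    simp [Sat, PTerm.val]
  refine hACA.induction hE ⟨0, ?_⟩ (fun s ⟨w, hw⟩ => ⟨w + s + 1, ?_⟩) s
  · change (0 : M) + 0 = 0 * (0 + 1)
    simp
  · change w + w = s * (s + 1) at hw
    change (w + s + 1) + (w + s + 1) = (s + 1) * (s + 1 + 1)
    rw [show (w + s + 1) + (w + s + 1) = (w + w) + (s + 1 + (s + 1)) by ring, hw]
    ring

lemma exists_pairRel (hACA : SatACA0 S 𝔛) (h𝔛 : 𝔛.Nonempty) (a b : M) :
    ∃ p, S.PairRel p a b := by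
  obtain ⟨w, hw⟩ := hACA.exists_add_self_eq_mul_succ h𝔛 (S.add a b)
  let _ := hACA.paMinus.commSemiring
  refine ⟨w + a, ?_⟩
  change w + w = (a + b) * (a + b + 1) at hw
  change (1 + 1) * (w + a) = (a + b) * (a + b + 1) + (1 + 1) * a
  rw [← hw]
  ring

lemma codedFun_of_graph_mem (hACA : SatACA0 S 𝔛) {f : M → M}
    (hG : {p | ∃ a, S.PairRel p a (f a)} ∈ 𝔛) : S.CodedFun 𝔛 f := by
  refine ⟨_, hG, fun a b => ⟨?_, ?_⟩⟩
  · rintro rfl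
    obtain ⟨p, hp⟩ := hACA.exists_pairRel ⟨_, hG⟩ a (f a)
    exact ⟨p, hp, a, hp⟩
  · rintro ⟨p, hp, a', hp'⟩
    obtain ⟨rfl, rfl⟩ := hACA.paMinus.pairRel_inj hp' hp
    rfl

/-- Witnessed by the even and the odd elements. -/
lemma exists_disjoint_unb (hACA : SatACA0 S 𝔛) (h𝔛 : 𝔛.Nonempty) :
    ∃ E ∈ 𝔛, ∃ E' ∈ 𝔛, Disjoint E E' ∧ S.Unb E ∧ S.Unb E' := by
  obtain ⟨X, hX⟩ := h𝔛
  have h := hACA.paMinus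
  let _ := h.commSemiring; let _ := h.linearOrder
  have _ := h.canonicallyOrderedAdd; have _ := h.isOrderedCancelAddMonoid
  have one_pos : (0 : M) < 1 := h.zero_lt_one
  refine ⟨{a | ∃ b, b + b = a}, ?_, {a | ∃ b, b + b + 1 = a}, ?_,
    Set.disjoint_left.2 fun a ⟨b, hb⟩ ⟨c, hc⟩ =>
      h.add_self_ne_add_self_add_one b c (hb.trans hc.symm),
    fun b => ⟨_, ⟨b + 1, rfl⟩, (lt_add_of_pos_right b one_pos).trans_le le_self_add⟩,
    fun b => ⟨_, ⟨b, rfl⟩, le_self_add.trans_lt (lt_add_of_pos_right _ one_pos)⟩⟩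
  · convert hACA.comprehension (φ := Fml.ex 1 (.eq (.add (.var 1) (.var 1)) (.var 0))) trivial
      0 (fun _ => S.zero) (w := fun _ => X) (fun _ => hX) using 1
    ext
    simp [Sat, PTerm.val]
    rfl
  · convert hACA.comprehension (φ := Fml.ex 1 (.eq (.add (.add (.var 1) (.var 1)) .one)
      (.var 0))) trivial 0 (fun _ => S.zero) (w := fun _ => X) (fun _ => hX) using 1
    ext
    simp [Sat, PTerm.val]
    rfl

end SatACA0

namespace IsUltraOn

variable {M : Type} {S : AStr M} {𝔛 U : Set (Set M)}

lemma mem_of_subset (hU : IsUltraOn (S.PX 𝔛) U) {A B : Set M} (hA : A ∈ U) (hB : B ∈ 𝔛)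
    (hAB : A ⊆ B) : B ∈ U :=
  hU.1.2.2.2.1 A hA B ⟨hB, fun b => ((hU.1.1 hA).2 b).imp fun _ ha => ⟨hAB ha.1, ha.2⟩⟩ hAB

lemma exists_subset_inter (hU : IsUltraOn (S.PX 𝔛) U) {A B : Set M} (hA : A ∈ U)
    (hB : B ∈ U) : ∃ C ∈ U, C ⊆ A ∧ C ⊆ B :=
  hU.1.2.2.2.2 A hA B hB

lemma inter_mem (hACA : SatACA0 S 𝔛) (hU : IsUltraOn (S.PX 𝔛) U) {A B : Set M} (hA : A ∈ U)
    (hB : B ∈ U) : A ∩ B ∈ U := by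
  obtain ⟨C, hC, hCA, hCB⟩ := hU.exists_subset_inter hA hB
  exact hU.mem_of_subset hC (hACA.inter_mem (hU.1.1 hA).1 (hU.1.1 hB).1)
    (Set.subset_inter hCA hCB)

/-- The traces of `U` on `D` generate a filter on `P_𝔛` extending `U`, so by maximality it is
`U`. -/
lemma mem_of_forall_unb_inter (hACA : SatACA0 S 𝔛) (hU : IsUltraOn (S.PX 𝔛) U) {D : Set M}
    (hD : D ∈ 𝔛) (hall : ∀ B ∈ U, S.Unb (B ∩ D)) : D ∈ U := by
  obtain ⟨B₀, hB₀⟩ := hU.1.2.1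
  set F := {E | E ∈ S.PX 𝔛 ∧ ∃ B ∈ U, B ∩ D ⊆ E}
  have hDF : D ∈ F :=
    ⟨⟨hD, fun b => (hall B₀ hB₀ b).imp fun _ ha => ⟨ha.1.2, ha.2⟩⟩, B₀, hB₀,
      Set.inter_subset_right⟩
  have hF : IsFilterOn (S.PX 𝔛) F := by
    refine ⟨fun E hE => hE.1, ⟨D, hDF⟩, fun hFP => ?_, ?_, ?_⟩
    · obtain ⟨E, hE, E', hE', hEE', hEu, hE'u⟩ := hACA.exists_disjoint_unb ⟨D, hD⟩
      obtain ⟨-, B, hB, hBE⟩ : E ∈ F := hFP ▸ ⟨hE, hEu⟩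
      obtain ⟨-, B', hB', hBE'⟩ : E' ∈ F := hFP ▸ ⟨hE', hE'u⟩
      obtain ⟨C, hC, hCB, hCB'⟩ := hU.exists_subset_inter hB hB'
      obtain ⟨a, ha, -⟩ := hall C hC S.zero
      exact Set.disjoint_left.1 hEE' (hBE ⟨hCB ha.1, ha.2⟩) (hBE' ⟨hCB' ha.1, ha.2⟩)
    · rintro E ⟨-, B, hB, hBE⟩ E' hE' hEE'
      exact ⟨hE', B, hB, hBE.trans hEE'⟩
    · rintro E ⟨-, B, hB, hBE⟩ E' ⟨-, B', hB', hBE'⟩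
      obtain ⟨C, hC, hCB, hCB'⟩ := hU.exists_subset_inter hB hB'
      refine ⟨C ∩ D, ⟨⟨hACA.inter_mem (hU.1.1 hC).1 hD, hall C hC⟩, C, hC, subset_rfl⟩,
        fun a ha => hBE ⟨hCB ha.1, ha.2⟩, fun a ha => hBE' ⟨hCB' ha.1, ha.2⟩⟩
  exact hU.2 F hF (fun B hB => ⟨hU.1.1 hB, B, hB, Set.inter_subset_left⟩) ▸ hDF

lemma mem_or_compl_mem (hACA : SatACA0 S 𝔛) (hU : IsUltraOn (S.PX 𝔛) U) {D : Set M}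
    (hD : D ∈ 𝔛) : D ∈ U ∨ Dᶜ ∈ U := by
  by_cases hall : ∀ B ∈ U, S.Unb (B ∩ D)
  · exact .inl (hU.mem_of_forall_unb_inter hACA hD hall)
  simp only [AStr.Unb, not_forall, not_exists, not_and] at hall
  obtain ⟨B, hB, b₀, hb₀⟩ := hall
  refine .inr (hU.mem_of_forall_unb_inter hACA (hACA.compl_mem hD) fun B' hB' b => ?_)
  let _ := hACA.paMinus.linearOrder
  -- `B ∩ D` is bounded by `b₀`, so members of `U` inside `B` avoid `D` above `b₀`
  obtain ⟨C, hC, hCB, hCB'⟩ := hU.exists_subset_inter hB hB'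
  obtain ⟨a, haC, hlt⟩ := (hU.1.1 hC).2 (max b₀ b)
  exact ⟨a, ⟨hCB' haC, fun haD => hb₀ a ⟨hCB haC, haD⟩ ((le_max_left b₀ b).trans_lt hlt)⟩,
    (le_max_right b₀ b).trans_lt hlt⟩

theorem isUltrafilterIn (hACA : SatACA0 S 𝔛) (hU : IsUltraOn (S.PX 𝔛) U) :
    IsUltrafilterIn 𝔛 U where
  mem_of_subset _ hA _ hB hAB := hU.mem_of_subset hA hB hAB
  inter_mem _ hA _ hB := hU.inter_mem hACA hA hB
  compl_mem_iff D hD := by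
    refine ⟨fun hDc hD' => ?_, (hU.mem_or_compl_mem hACA hD).resolve_left⟩
    obtain ⟨a, ha, -⟩ := (hU.1.1 (hU.inter_mem hACA hD' hDc)).2 S.zero
    exact ha.2 ha.1

end IsUltraOn

section Builders

/- A builder with base `B` quantifies over the variables `B, B + 1, …`; its term arguments must
have all their variables below `B`. -/

open PTerm

variable {M : Type} {S : AStr M} {𝔛 : Set (Set M)} {v : ℕ → M} {w : ℕ → Set M}

lemma PTerm.val_update_update {B : ℕ} {a b : M} {t : PTerm} (ht : t.VarsBelow B) :
    t.val S (update (update v B a) (B + 1) b) = t.val S v := by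
  rw [val_update_of_varsBelow S (ht.mono B.le_succ) le_rfl, val_update_of_varsBelow S ht le_rfl]

def pairF (p a b : PTerm) : Fml :=
  .eq (.mul (.add .one .one) p)
    (.add (.mul (.add a b) (.add (.add a b) .one)) (.mul (.add .one .one) a))

@[simp] lemma sat_pairF {p a b : PTerm} :
    Sat S 𝔛 v w (pairF p a b) ↔ S.PairRel (p.val S v) (a.val S v) (b.val S v) := Iff.rfl

def modF (a m r : PTerm) (B : ℕ) : Fml :=
  (Fml.lt r m).and (Fml.ex B (.eq a (.add (.mul (.var B) m) r)))

lemma sat_modF {a m r : PTerm} {B : ℕ} (ha : a.VarsBelow B) (hm : m.VarsBelow B)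
    (hr : r.VarsBelow B) :
    Sat S 𝔛 v w (modF a m r B) ↔ S.ModRel (a.val S v) (m.val S v) (r.val S v) := by
  simp [modF, AStr.ModRel, Sat, PTerm.val, val_update_of_varsBelow S ha le_rfl,
    val_update_of_varsBelow S hm le_rfl, val_update_of_varsBelow S hr le_rfl]

def betaF (c i x : PTerm) (B : ℕ) : Fml :=
  Fml.ex B (Fml.ex (B + 1) ((pairF c (.var B) (.var (B + 1))).and
    (modF (.var B) (.add .one (.mul (.add i .one) (.var (B + 1)))) x (B + 2))))

lemma sat_betaF {c i x : PTerm} {B : ℕ} (hc : c.VarsBelow B) (hi : i.VarsBelow B)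
    (hx : x.VarsBelow B) :
    Sat S 𝔛 v w (betaF c i x B) ↔ S.BetaRel (c.val S v) (i.val S v) (x.val S v) := by
  simp only [betaF, sat_ex, sat_and, sat_pairF]
  refine exists₂_congr fun a b => ?_
  rw [sat_modF (by simp) (by simp [hi.mono (by omega : B ≤ B + 2)]) (hx.mono (by omega))]
  simp [PTerm.val, val_update_update hc, val_update_update hi, val_update_update hx]

def seqLenF (s l : PTerm) (B : ℕ) : Fml := Fml.ex B (pairF s (.var B) l)

lemma sat_seqLenF {s l : PTerm} {B : ℕ} (hs : s.VarsBelow B) (hl : l.VarsBelow B) :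
    Sat S 𝔛 v w (seqLenF s l B) ↔ S.SeqLen (s.val S v) (l.val S v) := by
  simp [seqLenF, AStr.SeqLen, PTerm.val, val_update_of_varsBelow S hs le_rfl,
    val_update_of_varsBelow S hl le_rfl]

def seqAtF (s i x : PTerm) (B : ℕ) : Fml :=
  Fml.ex B (Fml.ex (B + 1) ((pairF s (.var B) (.var (B + 1))).and
    ((Fml.lt i (.var (B + 1))).and (betaF (.var B) i x (B + 2)))))

lemma sat_seqAtF {s i x : PTerm} {B : ℕ} (hs : s.VarsBelow B) (hi : i.VarsBelow B)
    (hx : x.VarsBelow B) :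
    Sat S 𝔛 v w (seqAtF s i x B) ↔ S.SeqAt (s.val S v) (i.val S v) (x.val S v) := by
  simp only [seqAtF, sat_ex, sat_and, sat_pairF]
  refine exists₂_congr fun c l => ?_
  rw [sat_betaF (by simp) (hi.mono (by omega)) (hx.mono (by omega))]
  simp [Sat, PTerm.val, val_update_update hs, val_update_update hi, val_update_update hx]

/-- The `k`-th entry of the sequence `s` is `g i`, where the graph of `g` is the set parameter
`k + 1`. -/
def graphEntryF (s i : PTerm) (k B : ℕ) : Fml :=
  Fml.ex B (Fml.ex (B + 1) ((pairF (.var (B + 1)) i (.var B)).and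
    ((Fml.mem (.var (B + 1)) (k + 1)).and (seqAtF s (numeral k) (.var B) (B + 2)))))

lemma sat_graphEntryF {s i : PTerm} {k B : ℕ} {g : M → M}
    (hg : ∀ a b, g a = b ↔ b ∈ S.SliceAt (w (k + 1)) a) (hs : s.VarsBelow B)
    (hi : i.VarsBelow B) :
    Sat S 𝔛 v w (graphEntryF s i k B) ↔ S.SeqAt (s.val S v) (S.num k) (g (i.val S v)) := by
  simp only [graphEntryF, sat_ex, sat_and, sat_pairF]
  simp only [Sat, sat_seqAtF (hs.mono (by omega : B ≤ B + 2)) varsBelow_numeral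
    (varsBelow_var.2 (by omega : B < B + 2))]
  simp only [PTerm.val, val_update_update hs, val_update_update hi, val_numeral, update_self,
    update_of_ne (by omega : B ≠ B + 1)]
  constructor
  · rintro ⟨y, q, hq, hqw, hy⟩
    rwa [(hg _ y).2 ⟨q, hq, hqw⟩]
  · intro hy
    obtain ⟨q, hq, hqw⟩ := (hg (i.val S v) _).1 rfl
    exact ⟨_, q, hq, hqw, hy⟩

def entryF (s i z : PTerm) (k x B : ℕ) : Fml :=
  if k = x then seqAtF s (numeral k) z B else graphEntryF s i k B

lemma sat_entryF {s i z : PTerm} {k x B : ℕ} {g : ℕ → M → M}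
    (hg : ∀ k a b, g k a = b ↔ b ∈ S.SliceAt (w (k + 1)) a) (hs : s.VarsBelow B)
    (hi : i.VarsBelow B) (hz : z.VarsBelow B) :
    Sat S 𝔛 v w (entryF s i z k x B) ↔
      S.SeqAt (s.val S v) (S.num k) (update (fun k => g k (i.val S v)) x (z.val S v) k) := by
  unfold entryF
  split_ifs with hkx
  · subst hkx
    simp [sat_seqAtF hs varsBelow_numeral hz]
  · rw [update_of_ne hkx, sat_graphEntryF (hg k) hs hi]

def conjF : List Fml → Fml
  | [] => .eq .zero .zero
  | φ :: l => φ.and (conjF l)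

@[simp] lemma sat_conjF (L : List Fml) : Sat S 𝔛 v w (conjF L) ↔ ∀ φ ∈ L, Sat S 𝔛 v w φ := by
  induction L <;> simp [conjF, Sat, *]

/-- The diagram formula: `s` codes the sequence of values of the variables `0, …, l - 1`, where
the `x`-th is `z` and the `k`-th is `g k i` otherwise, and `⟨n, s⟩` belongs to the set
parameter `0`. -/
def diagF (n l x : ℕ) (i z : PTerm) (B : ℕ) : Fml :=
  Fml.ex B (Fml.ex (B + 1) ((seqLenF (.var B) (numeral l) (B + 2)).and
    ((conjF ((List.range l).map fun k => entryF (.var B) i z k x (B + 2))).and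
      ((pairF (.var (B + 1)) (numeral n) (.var B)).and (.mem (.var (B + 1)) 0)))))

lemma sat_diagF {n l x B : ℕ} {i z : PTerm} {g : ℕ → M → M}
    (hg : ∀ k a b, g k a = b ↔ b ∈ S.SliceAt (w (k + 1)) a) (hi : i.VarsBelow B)
    (hz : z.VarsBelow B) :
    Sat S 𝔛 v w (diagF n l x i z B) ↔ ∃ s p, S.SeqLen s (S.num l) ∧
      (∀ k < l, S.SeqAt s (S.num k) (update (fun k => g k (i.val S v)) x (z.val S v) k)) ∧
      S.PairRel p (S.num n) s ∧ p ∈ w 0 := by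
  simp only [diagF, sat_ex, sat_and, sat_conjF, List.forall_mem_map, List.mem_range, sat_pairF]
  refine exists₂_congr fun s p => ?_
  simp only [sat_seqLenF (varsBelow_var.2 (by omega : B < B + 2)) varsBelow_numeral,
    sat_entryF hg (varsBelow_var.2 (by omega : B < B + 2)) (hi.mono (by omega))
      (hz.mono (by omega))]
  simp [Sat, PTerm.val, val_update_update hi, val_update_update hz]

lemma isArith_diagF {n l x B : ℕ} {i z : PTerm} : (diagF n l x i z B).IsArith := by
  have hconj : ∀ L : List Fml, (∀ φ ∈ L, φ.IsArith) → (conjF L).IsArith := by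
    intro L hL
    induction L <;> simp_all [conjF, Fml.and, Fml.IsArith]
  have hentry (k : ℕ) : (entryF (.var B) i z k x (B + 2)).IsArith := by
    unfold entryF
    split_ifs <;>
      simp [seqAtF, graphEntryF, betaF, modF, pairF, Fml.IsArith, Fml.ex, Fml.and]
  simpa [diagF, seqLenF, pairF, Fml.IsArith, Fml.ex, Fml.and] using
    hconj _ (by simp [hentry])

end Builders

section Definability

open PTerm

variable {M : Type} {S : AStr M} {𝔛 : Set (Set M)} {w : ℕ → Set M}

/-- Asking for a defining formula for each choice of argument variables avoids renaming variables
in formulas, which is not capture-free. -/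
def ArithDefinable₂ (S : AStr M) (𝔛 : Set (Set M)) (w : ℕ → Set M) (R : M → M → Prop) :
    Prop :=
  ∀ a b : ℕ, ∃ θ : Fml, θ.IsArith ∧ ∀ v, Sat S 𝔛 v w θ ↔ R (v a) (v b)

namespace ArithDefinable₂

variable {R : M → M → Prop}

lemma setOf_fst_mem (hR : ArithDefinable₂ S 𝔛 w R) (hACA : SatACA0 S 𝔛) (hw : ∀ k, w k ∈ 𝔛)
    (m : M) : {i | R i m} ∈ 𝔛 := by
  obtain ⟨θ, hθ, hθR⟩ := hR 0 1
  simpa [hθR] using hACA.comprehension hθ 0 (fun _ => m) hw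

lemma setOf_snd_mem (hR : ArithDefinable₂ S 𝔛 w R) (hACA : SatACA0 S 𝔛) (hw : ∀ k, w k ∈ 𝔛)
    (i : M) : {m | R i m} ∈ 𝔛 := by
  obtain ⟨θ, hθ, hθR⟩ := hR 1 0
  simpa [hθR] using hACA.comprehension hθ 0 (fun _ => i) hw

lemma or_forall_not (hR : ArithDefinable₂ S 𝔛 w R) :
    ArithDefinable₂ S 𝔛 w fun i m => R i m ∨ ∀ z, ¬ R i z := by
  intro a b
  obtain ⟨θ, hθ, hθR⟩ := hR a b
  obtain ⟨θ', hθ', hθ'R⟩ := hR a (a + b + 1)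
  refine ⟨θ.or (.all (a + b + 1) (.not θ')), ⟨hθ, hθ'⟩, fun v => ?_⟩
  simp [Sat, hθR, hθ'R, update_of_ne (by omega : a ≠ a + b + 1)]

/-- The least witness has an arithmetically defined graph. -/
lemma exists_codedFun (hR : ArithDefinable₂ S 𝔛 w R) (hACA : SatACA0 S 𝔛)
    (hw : ∀ k, w k ∈ 𝔛) (htot : ∀ i, ∃ m, R i m) : ∃ f, S.CodedFun 𝔛 f ∧ ∀ i, R i (f i) := by
  have h := hACA.paMinus
  let _ := h.linearOrder
  have hleast (i : M) := hACA.exists_least (hR.setOf_snd_mem hACA hw i) (htot i).choose_spec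
  choose f hfR hfle using hleast
  have hgraph (i m : M) : (R i m ∧ ∀ z, S.lt z m → ¬ R i z) ↔ m = f i := by
    refine ⟨fun ⟨him, hmin⟩ => le_antisymm (not_lt.1 fun hlt => hmin _ hlt (hfR i)) (hfle i m him),
      ?_⟩
    rintro rfl
    exact ⟨hfR i, fun z hz hiz => (show f i ≤ z from hfle i z hiz).not_gt hz⟩
  refine ⟨f, hACA.codedFun_of_graph_mem ?_, hfR⟩
  obtain ⟨θ, hθ, hθR⟩ := hR 1 2
  obtain ⟨θ', hθ', hθ'R⟩ := hR 1 3
  convert hACA.comprehension (φ := Fml.ex 1 (Fml.ex 2 ((pairF (.var 0) (.var 1) (.var 2)).and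
    (θ.and (.all 3 (.imp (.lt (.var 3) (.var 2)) (.not θ'))))))) ⟨trivial, hθ, trivial, hθ'⟩ 0
    (fun _ => S.zero) hw using 1
  ext p
  simp [Sat, hθR, hθ'R, PTerm.val, hgraph]

lemma exists_codedFun_choice (hR : ArithDefinable₂ S 𝔛 w R) (hACA : SatACA0 S 𝔛)
    (hw : ∀ k, w k ∈ 𝔛) : ∃ f, S.CodedFun 𝔛 f ∧ ∀ i, (∃ m, R i m) → R i (f i) := by
  obtain ⟨f, hf, hfR⟩ := hR.or_forall_not.exists_codedFun hACA hw fun i =>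
    (em (∃ m, R i m)).elim (fun ⟨m, hm⟩ => ⟨m, .inl hm⟩) fun h => ⟨S.zero, .inr (not_exists.1 h)⟩
  exact ⟨f, hf, fun i ⟨m, hm⟩ => (hfR i).resolve_right fun h => h m hm⟩

end ArithDefinable₂

def paramSets (C : Set M) (G : ℕ → Set M) : ℕ → Set M
  | 0 => C
  | k + 1 => G k

/-- The hypothesis `hdiag` of the setup: `C` codes the elementary diagram of `K0`. -/
def CodesDiagram (S K0 : AStr M) (C : Set M) : Prop :=
  ∀ (φ : Fml) (l : ℕ) (v : ℕ → M), Fml.IsFO φ → φ.freeN ⊆ Finset.range l →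
    (SatFO K0 v φ ↔ ∃ s p, S.SeqLen s (S.num l) ∧ (∀ i < l, S.SeqAt s (S.num i) (v i)) ∧
      S.PairRel p (S.num (Fml.code φ)) s ∧ p ∈ C)

variable {K0 : AStr M} {C : Set M}

lemma arithDefinable₂_satFO (hdiag : CodesDiagram S K0 C) {g : ℕ → M → M} {G : ℕ → Set M}
    (hG : ∀ k a b, g k a = b ↔ b ∈ S.SliceAt (G k) a) {ψ : Fml} (hψ : ψ.IsFO) (x : ℕ) :
    ArithDefinable₂ S 𝔛 (paramSets C G) fun i m =>
      SatFO K0 (update (fun k => g k i) x m) ψ := by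
  intro a b
  refine ⟨diagF ψ.code (ψ.freeN.sup id + 1) x (.var a) (.var b) (a + b + 1), isArith_diagF,
    fun v => ?_⟩
  beta_reduce
  rw [sat_diagF hG (varsBelow_var.2 (by omega)) (varsBelow_var.2 (by omega)),
    hdiag ψ _ _ hψ (Finset.subset_range_sup_succ _)]
  simp [PTerm.val, paramSets]

theorem truthSetsIn_codedFun (hACA : SatACA0 S 𝔛) (hC : C ∈ 𝔛)
    (hdiag : CodesDiagram S K0 C) : TruthSetsIn K0 (S.CodedFun 𝔛) 𝔛 := by
  intro φ g hφ hg
  choose G hG𝔛 hG using hg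
  have hw : ∀ k, paramSets C G k ∈ 𝔛 := fun | 0 => hC | k + 1 => hG𝔛 k
  convert (arithDefinable₂_satFO hdiag hG hφ (φ.freeN.sup id + 1)).setOf_fst_mem hACA hw
    S.zero using 1
  ext i
  show SatFO K0 _ φ ↔ SatFO K0 _ φ
  refine (sat_congr φ fun k hk => ?_).symm
  exact update_of_ne (ne_of_mem_of_not_mem hk (sup_id_add_one_notMem _)) _ _

theorem hasSkolemFunctions_codedFun (hACA : SatACA0 S 𝔛) (hC : C ∈ 𝔛)
    (hdiag : CodesDiagram S K0 C) : HasSkolemFunctions K0 (S.CodedFun 𝔛) := by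
  intro φ g x hφ hg
  choose G hG𝔛 hG using hg
  exact (arithDefinable₂_satFO hdiag hG hφ x).exists_codedFun_choice hACA
    fun | 0 => hC | k + 1 => hG𝔛 k

end Definability

section Transfer

variable {M α β : Type} {K : AStr α} {K' : AStr β} {ϱ : α → β}

lemma TruthSetsIn.comp_isIso {Adm : (M → β) → Prop} {𝔅 : Set (Set M)}
    (h : TruthSetsIn K' Adm 𝔅) (hϱ : K.IsIso K' ϱ) :
    TruthSetsIn K (fun f => Adm fun a => ϱ (f a)) 𝔅 := by
  intro φ v hφ hv
  simpa only [satFO_map hϱ _ _ hφ] using h φ (fun k a => ϱ (v k a)) hφ hv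

lemma HasSkolemFunctions.comp_isIso {Adm : (M → β) → Prop} (h : HasSkolemFunctions K' Adm)
    (hϱ : K.IsIso K' ϱ) : HasSkolemFunctions K (fun f => Adm fun a => ϱ (f a)) := by
  intro φ v x hφ hv
  obtain ⟨f, hf, hfφ⟩ := h φ (fun k a => ϱ (v k a)) x hφ hv
  have key (i : M) (b : α) : SatFO K (update (fun k => v k i) x b) φ ↔
      SatFO K' (update (fun k => ϱ (v k i)) x (ϱ b)) φ := by
    rw [← satFO_map hϱ _ _ hφ, comp_update_eq]
  refine ⟨fun a => (Equiv.ofBijective ϱ hϱ.bijective).symm (f a),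
    by simpa only [Equiv.ofBijective_apply_symm_apply] using hf, fun i ⟨b, hb⟩ => ?_⟩
  rw [key] at hb ⊢
  simpa only [Equiv.ofBijective_apply_symm_apply] using hfφ i ⟨_, hb⟩

end Transfer

theorem restricted_ultrapower_los_general
    {M KT NT : Type} (S : AStr M) (𝔛 : Set (Set M))
    (K : AStr KT) (K0 : AStr M) (C : Set M) (ϱ : KT → M)
    (U : Set (Set M)) (SN : AStr NT) (π : (M → KT) → NT)
    -- the second-order structure (M,𝔛) ⊨ ACA₀
    (hACA : SatACA0 S 𝔛)
    -- K₀ ⊨ T has domain M and its elementary diagram is coded by C ∈ 𝔛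
    (hC : C ∈ 𝔛)
    (hdiag : ∀ (φ : Fml) (l : ℕ) (v : ℕ → M), Fml.IsFO φ → φ.freeN ⊆ Finset.range l →
      (SatFO K0 v φ ↔ ∃ s p, S.SeqLen s (S.num l) ∧ (∀ i < l, S.SeqAt s (S.num i) (v i)) ∧
        S.PairRel p (S.num (Fml.code φ)) s ∧ p ∈ C))
    -- ϱ : K ≅ K₀ is an isomorphism
    (hrbij : Function.Bijective ϱ)
    (hr0 : ϱ K.zero = K0.zero) (hr1 : ϱ K.one = K0.one)
    (hradd : ∀ a b, ϱ (K.add a b) = K0.add (ϱ a) (ϱ b))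
    (hrmul : ∀ a b, ϱ (K.mul a b) = K0.mul (ϱ a) (ϱ b))
    (hrlt : ∀ a b, K.lt a b ↔ K0.lt (ϱ a) (ϱ b))
    -- U is an ultrafilter on P_𝔛
    (hU : IsUltraOn (S.PX 𝔛) U)
    -- (NT, SN, π) realizes the restricted ultrapower N = ∏_𝔛 K / U :
    -- π maps ∏_𝔛 K (the functions f with ϱ ∘ f coded in 𝔛) onto N,
    -- identifying f and g exactly when they agree on a set in U
    (hsurj : ∀ n : NT, ∃ f : M → KT, S.CodedFun 𝔛 (fun a => ϱ (f a)) ∧ π f = n)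
    (heq : ∀ f g : M → KT, S.CodedFun 𝔛 (fun a => ϱ (f a)) →
      S.CodedFun 𝔛 (fun a => ϱ (g a)) → (π f = π g ↔ {a : M | f a = g a} ∈ U))
    (hzero : ∀ f : M → KT, S.CodedFun 𝔛 (fun a => ϱ (f a)) → (∀ a, f a = K.zero) →
      π f = SN.zero)
    (hone : ∀ f : M → KT, S.CodedFun 𝔛 (fun a => ϱ (f a)) → (∀ a, f a = K.one) →
      π f = SN.one)
    (hadd : ∀ f g h : M → KT, S.CodedFun 𝔛 (fun a => ϱ (f a)) →
      S.CodedFun 𝔛 (fun a => ϱ (g a)) → S.CodedFun 𝔛 (fun a => ϱ (h a)) →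
      (∀ a, h a = K.add (f a) (g a)) → SN.add (π f) (π g) = π h)
    (hmul : ∀ f g h : M → KT, S.CodedFun 𝔛 (fun a => ϱ (f a)) →
      S.CodedFun 𝔛 (fun a => ϱ (g a)) → S.CodedFun 𝔛 (fun a => ϱ (h a)) →
      (∀ a, h a = K.mul (f a) (g a)) → SN.mul (π f) (π g) = π h)
    (hlt : ∀ f g : M → KT, S.CodedFun 𝔛 (fun a => ϱ (f a)) →
      S.CodedFun 𝔛 (fun a => ϱ (g a)) →
      (SN.lt (π f) (π g) ↔ {a : M | K.lt (f a) (g a)} ∈ U)) :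
    ∀ (φ : Fml) (v : ℕ → M → KT), Fml.IsFO φ →
      (∀ k, S.CodedFun 𝔛 (fun a => ϱ (v k a))) →
      (SatFO SN (fun k => π (v k)) φ ↔ {i : M | SatFO K (fun k => v k i) φ} ∈ U) := by
  have hϱ : K.IsIso K0 ϱ := ⟨⟨hr0, hr1, hradd, hrmul⟩, hrbij, hrlt⟩
  exact IsReducedPower.satFO_iff (Adm := fun f => S.CodedFun 𝔛 fun a => ϱ (f a))
    ⟨hsurj, heq, hzero, hone, hadd, hmul, hlt⟩ (hU.isUltrafilterIn hACA)
    ((truthSetsIn_codedFun hACA hC hdiag).comp_isIso hϱ)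
    ((hasSkolemFunctions_codedFun hACA hC hdiag).comp_isIso hϱ)

/-- Łoś's theorem for the restricted ultrapower `N = ∏_𝔛 K / U`. -/
theorem restricted_ultrapower_los
    {M KT NT : Type} (S : AStr M) (𝔛 : Set (Set M)) (T : Set Fml) (A : Set M)
    (K : AStr KT) (j : M → KT) (K0 : AStr M) (C : Set M) (ϱ : KT → M)
    (U : Set (Set M)) (SN : AStr NT) (π : (M → KT) → NT)
    -- the second-order structure (M,𝔛) ⊨ ACA₀
    (hACA : SatACA0 S 𝔛)
    -- T ⊇ PA is a theory coded in 𝔛 with M ⊨ Con_T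
    (hSent : ∀ φ ∈ T, IsFOSentence φ) (hPA : PAax ⊆ T)
    (hA : A ∈ 𝔛) (hTcode : ∀ n : ℕ, (S.num n ∈ A ↔ n ∈ theoryCode T))
    (hCon : S.SatConTheory T)
    -- M ⊆_e K : j embeds M onto an initial segment of K
    (hjinj : Function.Injective j)
    (hj0 : j S.zero = K.zero) (hj1 : j S.one = K.one)
    (hjadd : ∀ a b, j (S.add a b) = K.add (j a) (j b))
    (hjmul : ∀ a b, j (S.mul a b) = K.mul (j a) (j b))
    (hjlt : ∀ a b, S.lt a b ↔ K.lt (j a) (j b))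
    (hjinit : ∀ (x : KT) (a : M), K.lt x (j a) → ∃ b : M, j b = x)
    -- K₀ ⊨ T has domain M and its elementary diagram is coded by C ∈ 𝔛
    (hK0T : ModelsT K0 T) (hC : C ∈ 𝔛)
    (hdiag : ∀ (φ : Fml) (l : ℕ) (v : ℕ → M), Fml.IsFO φ → φ.freeN ⊆ Finset.range l →
      (SatFO K0 v φ ↔ ∃ s p, S.SeqLen s (S.num l) ∧ (∀ i < l, S.SeqAt s (S.num i) (v i)) ∧
        S.PairRel p (S.num (Fml.code φ)) s ∧ p ∈ C))
    -- ϱ : K ≅ K₀ is an isomorphism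
    (hrbij : Function.Bijective ϱ)
    (hr0 : ϱ K.zero = K0.zero) (hr1 : ϱ K.one = K0.one)
    (hradd : ∀ a b, ϱ (K.add a b) = K0.add (ϱ a) (ϱ b))
    (hrmul : ∀ a b, ϱ (K.mul a b) = K0.mul (ϱ a) (ϱ b))
    (hrlt : ∀ a b, K.lt a b ↔ K0.lt (ϱ a) (ϱ b))
    -- ϱ ∘ j is the canonical embedding of M into K₀, and it is coded in 𝔛
    (hcan0 : ϱ (j S.zero) = K0.zero)
    (hcansucc : ∀ a, ϱ (j (S.add a S.one)) = K0.add (ϱ (j a)) K0.one)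
    (hcancod : S.CodedFun 𝔛 (fun a => ϱ (j a)))
    -- U is an ultrafilter on P_𝔛
    (hU : IsUltraOn (S.PX 𝔛) U)
    -- (NT, SN, π) realizes the restricted ultrapower N = ∏_𝔛 K / U :
    -- π maps ∏_𝔛 K (the functions f with ϱ ∘ f coded in 𝔛) onto N,
    -- identifying f and g exactly when they agree on a set in U
    (hsurj : ∀ n : NT, ∃ f : M → KT, S.CodedFun 𝔛 (fun a => ϱ (f a)) ∧ π f = n)
    (heq : ∀ f g : M → KT, S.CodedFun 𝔛 (fun a => ϱ (f a)) →
      S.CodedFun 𝔛 (fun a => ϱ (g a)) → (π f = π g ↔ {a : M | f a = g a} ∈ U))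
    (hzero : ∀ f : M → KT, S.CodedFun 𝔛 (fun a => ϱ (f a)) → (∀ a, f a = K.zero) →
      π f = SN.zero)
    (hone : ∀ f : M → KT, S.CodedFun 𝔛 (fun a => ϱ (f a)) → (∀ a, f a = K.one) →
      π f = SN.one)
    (hadd : ∀ f g h : M → KT, S.CodedFun 𝔛 (fun a => ϱ (f a)) →
      S.CodedFun 𝔛 (fun a => ϱ (g a)) → S.CodedFun 𝔛 (fun a => ϱ (h a)) →
      (∀ a, h a = K.add (f a) (g a)) → SN.add (π f) (π g) = π h)
    (hmul : ∀ f g h : M → KT, S.CodedFun 𝔛 (fun a => ϱ (f a)) →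
      S.CodedFun 𝔛 (fun a => ϱ (g a)) → S.CodedFun 𝔛 (fun a => ϱ (h a)) →
      (∀ a, h a = K.mul (f a) (g a)) → SN.mul (π f) (π g) = π h)
    (hlt : ∀ f g : M → KT, S.CodedFun 𝔛 (fun a => ϱ (f a)) →
      S.CodedFun 𝔛 (fun a => ϱ (g a)) →
      (SN.lt (π f) (π g) ↔ {a : M | K.lt (f a) (g a)} ∈ U)) :
    ∀ (φ : Fml) (v : ℕ → M → KT), Fml.IsFO φ →
      (∀ k, S.CodedFun 𝔛 (fun a => ϱ (v k a))) →
      (SatFO SN (fun k => π (v k)) φ ↔ {i : M | SatFO K (fun k => v k i) φ} ∈ U) :=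
  restricted_ultrapower_los_general S 𝔛 K K0 C ϱ U SN π hACA hC hdiag hrbij hr0 hr1 hradd hrmul hrlt
    hU hsurj heq hzero hone hadd hmul hlt

end Paper
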